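/- arXiv:1803.00934 — 12 statements merged into one kernel-verified Lean document; each statement's English description precedes it below -/
import Mathlib

section
/- Let (g, φ) be a quadratic Lie algebra over a field of characteristic 0 that is 2-step nilpotent (i.e., [[g,g],g] = 0) and reduced (i.e., Z(g) ⊆ [g,g]). Then [g,g] = Z(g) = [g,g]^⊥, so [g,g] is a totally isotropic subspace of dimension (dim g)/2; in particular dim g is even and φ is metabolic. -/
/-- For a quadratic 2-step nilpotent reduced Lie algebra `(g, φ)`
over char 0: `[g,g] = Z(g) = [g,g]^⊥`, so `[g,g]` is totally isotropic of dimension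
`(dim g)/2`; in particular `dim g` is even and `φ` is metabolic. -/
theorem stmt_4 {K : Type*} [Field K] [CharZero K]
    {g : Type*} [LieRing g] [LieAlgebra K g] [Module.Finite K g]
    (φ : LinearMap.BilinForm K g)
    (hsymm : φ.IsSymm) (hnd : φ.Nondegenerate)
    (hinv : ∀ x y z : g, φ ⁅x, y⁆ z = φ x ⁅y, z⁆)
    (h2step : ∀ x y z : g, ⁅⁅x, y⁆, z⁆ = 0)
    (hred : LieAlgebra.center K g ≤ ⁅(⊤ : LieIdeal K g), (⊤ : LieIdeal K g)⁆) :
    (⁅(⊤ : LieIdeal K g), (⊤ : LieIdeal K g)⁆ : LieIdeal K g) = LieAlgebra.center K g ∧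
    (⁅(⊤ : LieIdeal K g), (⊤ : LieIdeal K g)⁆ : LieIdeal K g).toSubmodule
      = φ.orthogonal (⁅(⊤ : LieIdeal K g), (⊤ : LieIdeal K g)⁆ : LieIdeal K g).toSubmodule ∧
    (∀ x ∈ (⁅(⊤ : LieIdeal K g), (⊤ : LieIdeal K g)⁆ : LieIdeal K g),
      ∀ y ∈ (⁅(⊤ : LieIdeal K g), (⊤ : LieIdeal K g)⁆ : LieIdeal K g), φ x y = 0) ∧
    2 * Module.finrank K
        (⁅(⊤ : LieIdeal K g), (⊤ : LieIdeal K g)⁆ : LieIdeal K g).toSubmodule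
      = Module.finrank K g ∧
    Even (Module.finrank K g) ∧
    ∃ W : Submodule K g, (∀ x ∈ W, ∀ y ∈ W, φ x y = 0) ∧
      2 * Module.finrank K W = Module.finrank K g := by
  have hrefl : φ.IsRefl := hsymm.isRefl
  set D : LieIdeal K g := ⁅(⊤ : LieIdeal K g), (⊤ : LieIdeal K g)⁆ with hD
  have hle : ∀ S : Submodule K g, (∀ a b : g, ⁅a, b⁆ ∈ S) →
      (LieSubmodule.toSubmodule D) ≤ S := by
    intro S hS
    show (LieSubmodule.toSubmodule (⁅(⊤ : LieIdeal K g), (⊤ : LieIdeal K g)⁆ : LieIdeal K g)) ≤ S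
    rw [LieSubmodule.lieIdeal_oper_eq_linear_span, Submodule.span_le]
    rintro _ ⟨⟨a, -⟩, ⟨b, -⟩, rfl⟩
    exact hS a b
  have hDZ : D ≤ LieAlgebra.center K g := by
    intro x hx
    exact hle (LieSubmodule.toSubmodule (LieAlgebra.center K g))
      (fun a b => (LieModule.mem_maxTrivSubmodule K g g ⁅a, b⁆).mpr
        (fun y => by rw [← lie_skew]; simp [h2step])) hx
  have hDeq : D = LieAlgebra.center K g := le_antisymm hDZ hred
  have horth : (LieSubmodule.toSubmodule D) = φ.orthogonal (LieSubmodule.toSubmodule D) := by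
    ext x
    constructor
    · intro hx
      have hxc : ∀ b : g, ⁅b, x⁆ = 0 := (LieModule.mem_maxTrivSubmodule K g g x).mp (hDZ hx)
      intro n hn
      have : (LieSubmodule.toSubmodule D) ≤ LinearMap.ker (φ.flip x) := by
        refine hle _ fun a b => ?_
        simp only [LinearMap.mem_ker, LinearMap.flip_apply]
        show φ ⁅a, b⁆ x = 0
        rw [hinv a b x, hxc, map_zero]
      simpa using this hn
    · intro hx
      refine hred ?_
      refine (LieModule.mem_maxTrivSubmodule K g g x).mpr fun a => ?_
      apply hnd.1
      intro b
      have h1 : φ ⁅b, a⁆ x = 0 := hx ⁅b, a⁆ (LieSubmodule.lie_mem_lie trivial trivial)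
      calc φ ⁅a, x⁆ b = φ b ⁅a, x⁆ := hsymm.eq ⁅a, x⁆ b
        _ = φ ⁅b, a⁆ x := (hinv b a x).symm
        _ = 0 := h1
  have hiso : ∀ x ∈ D, ∀ y ∈ D, φ x y = 0 := by
    intro x hx y hy
    have hy' : y ∈ φ.orthogonal (LieSubmodule.toSubmodule D) := horth ▸ hy
    exact hy' x hx
  have hdim : Module.finrank K (LieSubmodule.toSubmodule D) +
      Module.finrank K (φ.orthogonal (LieSubmodule.toSubmodule D)) = Module.finrank K g := by
    have := LinearMap.BilinForm.finrank_add_finrank_orthogonal hrefl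
      (W := (LieSubmodule.toSubmodule D)) (B := φ)
    rwa [φ.orthogonal_top_eq_bot hnd, inf_bot_eq, finrank_bot, add_zero] at this
  rw [← horth] at hdim
  refine ⟨hDeq, horth, hiso, by omega, ⟨Module.finrank K (LieSubmodule.toSubmodule D), by omega⟩,
    LieSubmodule.toSubmodule D, hiso, by omega⟩
end

section
/- Let v be a finite-dimensional real inner product space and ρ : v → so(v) an injective linear map satisfying ρ(u)(v) + ρ(v)(u) = 0 for all u,v ∈ v. Define on n = v ⊕ v* the bracket [u+g, v+h] = f_{u,v} where f_{u,v}(w) = ⟨ρ(w)(u), v⟩, and the bilinear form φ(v₁+f₁, v₂+f₂) = f₁(v₂) + f₂(v₁). Then (n, φ) is a quadratic 2-step nilpotent Lie algebra with [n,n] = v* = Z(n); in particular n is reduced. -/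
open scoped RealInnerProductSpace

/-!
Everything reduces to two identities for `f_{u,x}(w) = ⟪ρ(w)u, x⟫`: skewness of `ρ(w)` gives
`f_{u,x} = -f_{x,u}` (anticommutativity), and together with `ρ(u)w = -ρ(w)u` it gives the cyclic
symmetry `f_{u,x}(w) = f_{x,w}(u)`, which is the invariance of `φ`. Injectivity of `ρ` enters
twice: a vector `w` killed by every `f_{u,x}` has `ρ(w) = 0`, so the `f_{u,x}` span `v*`; and a
`u` with `f_{u,·} = 0` has `ρ(·)u = 0`, hence `ρ(u) = 0`, so no nonzero vector of `v` is central.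
-/

/-- The linear functional `f_{u,x} : w ↦ ⟪ρ(w)(u), x⟫`. -/
noncomputable def fmap {v : Type*} [NormedAddCommGroup v] [InnerProductSpace ℝ v]
    (ρ : v →ₗ[ℝ] v →ₗ[ℝ] v) (u x : v) : Module.Dual ℝ v where
  toFun w := ⟪ρ w u, x⟫
  map_add' a b := by simp [map_add, inner_add_left]
  map_smul' c a := by simp [map_smul, inner_smul_left]

theorem eq_zero_of_forall_snd_apply_add_snd_apply_eq_zero {R M : Type*} [CommSemiring R]
    [AddCommMonoid M] [Module R M] [Module.Projective R M] (p : M × Module.Dual R M)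
    (hp : ∀ q : M × Module.Dual R M, p.2 q.1 + q.2 p.1 = 0) : p = 0 := by
  have hsnd : p.2 = 0 := LinearMap.ext fun x => by simpa using hp (x, 0)
  have hfst : p.1 = 0 := (Module.forall_dual_apply_eq_zero_iff R p.1).1 fun f => by
    simpa [hsnd] using hp (0, f)
  exact Prod.ext hfst hsnd

section fmap

variable {v : Type*} [NormedAddCommGroup v] [InnerProductSpace ℝ v] (ρ : v →ₗ[ℝ] v →ₗ[ℝ] v)

@[simp]
theorem fmap_apply (u x w : v) : fmap ρ u x w = ⟪ρ w u, x⟫ := rfl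

@[simp]
theorem fmap_zero_left (x : v) : fmap ρ 0 x = 0 := by
  ext w
  simp

theorem fmap_swap (hso : ∀ w a b : v, ⟪ρ w a, b⟫ = -⟪a, ρ w b⟫) (u x : v) :
    fmap ρ u x = -fmap ρ x u := by
  ext w
  simp [hso w u x, real_inner_comm]

theorem fmap_apply_cyclic (hso : ∀ w a b : v, ⟪ρ w a, b⟫ = -⟪a, ρ w b⟫)
    (hρ : ∀ u w : v, ρ u w + ρ w u = 0) (u x w : v) :
    fmap ρ u x w = fmap ρ x w u := by
  rw [fmap_apply, fmap_apply, eq_neg_of_add_eq_zero_right (hρ u w), inner_neg_left, hso,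
    neg_neg, real_inner_comm]

theorem forall_fmap_eq_zero_iff (hinj : Function.Injective ρ)
    (hρ : ∀ u w : v, ρ u w + ρ w u = 0) (u : v) :
    (∀ x, fmap ρ u x = 0) ↔ u = 0 := by
  refine ⟨fun h => ?_, by rintro rfl x; exact fmap_zero_left ρ x⟩
  have hρu : ∀ w, ρ w u = 0 := fun w =>
    inner_self_eq_zero.mp (LinearMap.congr_fun (h (ρ w u)) w)
  refine hinj (LinearMap.ext fun w => ?_)
  simpa [hρu w] using hρ u w

theorem span_fmap_eq_top [FiniteDimensional ℝ v] (hinj : Function.Injective ρ) :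
    Submodule.span ℝ {f : Module.Dual ℝ v | ∃ u x, fmap ρ u x = f} = ⊤ := by
  set W := Submodule.span ℝ {f : Module.Dual ℝ v | ∃ u x, fmap ρ u x = f}
  have hW : W.dualCoannihilator = ⊥ := by
    refine (Submodule.eq_bot_iff _).2 fun w hw => hinj (LinearMap.ext fun u => ?_)
    rw [Submodule.mem_dualCoannihilator] at hw
    simpa using inner_self_eq_zero.mp (hw _ (Submodule.subset_span ⟨u, ρ w u, rfl⟩))
  simpa [hW] using (Subspace.dualCoannihilator_dualAnnihilator_eq (W := W)).symm

end fmap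

/-- For a finite-dimensional real inner product space `v` and an injective
linear `ρ : v → so(v)` with `ρ(u)(w) + ρ(w)(u) = 0`, the space `n = v ⊕ v*` with bracket
`[u+g, v+h] = f_{u,v}` and hyperbolic form `φ` is a quadratic 2-step nilpotent Lie
algebra with `[n,n] = v* = Z(n)`; in particular `n` is reduced. -/
theorem stmt_5 {v : Type*} [NormedAddCommGroup v] [InnerProductSpace ℝ v]
    [FiniteDimensional ℝ v]
    (ρ : v →ₗ[ℝ] v →ₗ[ℝ] v)
    (hso : ∀ w a b : v, ⟪ρ w a, b⟫ = -⟪a, ρ w b⟫)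
    (hinj : Function.Injective ρ)
    (hρ : ∀ u w : v, ρ u w + ρ w u = 0)
    (br : (v × Module.Dual ℝ v) → (v × Module.Dual ℝ v) → (v × Module.Dual ℝ v))
    (hbr : ∀ p q, br p q = (0, fmap ρ p.1 q.1))
    (φ : (v × Module.Dual ℝ v) → (v × Module.Dual ℝ v) → ℝ)
    (hφ : ∀ p q, φ p q = p.2 q.1 + q.2 p.1) :
    -- anticommutativity
    (∀ p q, br p q = - br q p) ∧
    -- 2-step nilpotency (Jacobi holds trivially)
    (∀ p q r, br (br p q) r = 0) ∧
    -- φ is symmetric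
    (∀ p q, φ p q = φ q p) ∧
    -- φ is nondegenerate
    (∀ p, (∀ q, φ p q = 0) → p = 0) ∧
    -- φ is invariant
    (∀ p q r, φ (br p q) r = φ p (br q r)) ∧
    -- [n,n] = v*
    Submodule.span ℝ {x | ∃ p q, br p q = x}
      = Submodule.prod (⊥ : Submodule ℝ v) (⊤ : Submodule ℝ (Module.Dual ℝ v)) ∧
    -- Z(n) = v*, so n is reduced
    {p | ∀ q, br p q = 0}
      = (Submodule.prod (⊥ : Submodule ℝ v) (⊤ : Submodule ℝ (Module.Dual ℝ v)) : Set _) := by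
  obtain rfl : br = fun p q => (0, fmap ρ p.1 q.1) := funext₂ hbr
  obtain rfl : φ = fun p q => p.2 q.1 + q.2 p.1 := funext₂ hφ
  have hbrackets : {x | ∃ p q : v × Module.Dual ℝ v, ((0 : v), fmap ρ p.1 q.1) = x} =
      LinearMap.inr ℝ v (Module.Dual ℝ v) '' {f | ∃ u x, fmap ρ u x = f} := by
    ext x
    simp [eq_comm]
  refine ⟨fun p q => ?_, fun p q r => ?_, fun p q => add_comm _ _,
    eq_zero_of_forall_snd_apply_add_snd_apply_eq_zero, fun p q r => ?_, ?_, ?_⟩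
  · simp [fmap_swap ρ hso p.1]
  · simp
  · simp [fmap_apply_cyclic ρ hso hρ p.1]
  · rw [hbrackets, Submodule.span_image, span_fmap_eq_top ρ hinj, Submodule.map_inr]
  · ext p
    simp [Prod.ext_iff, forall_fmap_eq_zero_iff ρ hinj hρ]
end

section
/- Over a field K of characteristic 0, there is no 4-quadratic family of matrices: any 4 × 6 matrix of the form B(A₁,A₂,A₃,A₄) = [[0,0,0,−a,−b,−c],[0,a,b,0,0,−d],[−a,0,c,0,d,0],[−b,−c,0,−d,0,0]] (a,b,c,d ∈ K) has rank at most 3; hence there are no reduced quadratic 2-step nilpotent Lie algebras of type 4. -/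
/-!
Writing `T i k j := A i k j`, the conditions on a quadratic family say exactly that `T` is an
alternating 3-tensor on `K⁴`: skew in `(k, j)` by skewsymmetry of `Aᵢ`, skew in `(i, j)` by the
column condition. Such a tensor is determined by `a = T 0 1 2`, `b = T 0 1 3`, `c = T 0 2 3`,
`d = T 1 2 3`, and `B(A₁,…,A₄)` becomes, up to ordering its columns, the displayed matrix. The
latter has rank at most 3 because `(d, -c, b, -a)` lies in its left kernel, and it vanishes when
that vector does.
-/

open Matrix

theorem Matrix.rank_lt_card_height_of_vecMul_eq_zero {m n K : Type*} [Fintype m] [Fintype n]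
    [Field K] (M : Matrix m n K) {v : m → K} (hv : v ≠ 0) (h : v ᵥ* M = 0) :
    M.rank < Fintype.card m := by
  have hker : LinearMap.ker Mᵀ.mulVecLin ≠ ⊥ :=
    (Submodule.ne_bot_iff _).2 ⟨v, by simpa [mulVec_transpose] using h, hv⟩
  have hker_pos := Submodule.finrank_eq_zero.not.2 hker
  have hsum := LinearMap.finrank_range_add_finrank_ker Mᵀ.mulVecLin
  rw [Module.finrank_fintype_fun_eq_card] at hsum
  rw [← rank_transpose, rank]
  omega

namespace QuadraticFamily

variable {K : Type*} [Field K]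

def shapeMatrix (a b c d : K) : Matrix (Fin 4) (Fin 6) K :=
  !![0, 0, 0, -a, -b, -c;
     0, a, b, 0, 0, -d;
     -a, 0, c, 0, d, 0;
     -b, -c, 0, -d, 0, 0]

theorem vecMul_shapeMatrix (a b c d : K) : ![d, -c, b, -a] ᵥ* shapeMatrix a b c d = 0 := by
  ext j
  fin_cases j <;> simp [shapeMatrix, vecMul, dotProduct, Fin.sum_univ_four] <;> ring

theorem rank_shapeMatrix_le (a b c d : K) : (shapeMatrix a b c d).rank ≤ 3 := by
  by_cases hv : ![d, -c, b, -a] = 0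
  · obtain ⟨rfl, rfl, rfl, rfl⟩ : a = 0 ∧ b = 0 ∧ c = 0 ∧ d = 0 := by
      simp only [cons_eq_zero_iff, neg_eq_zero, zero_empty] at hv
      tauto
    have hzero : shapeMatrix (0 : K) 0 0 0 = 0 := by
      ext i j
      fin_cases i <;> fin_cases j <;> simp [shapeMatrix]
    simp [hzero]
  · exact Nat.le_of_lt_succ
      (rank_lt_card_height_of_vecMul_eq_zero _ hv (vecMul_shapeMatrix a b c d))

/-- The matrix `B(A₁,…,A₄)`, with columns indexed by the pairs `i < j`. -/
def pairMatrix (A : Fin 4 → Matrix (Fin 4) (Fin 4) K) :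
    Matrix (Fin 4) {p : Fin 4 × Fin 4 // p.1 < p.2} K :=
  Matrix.of fun k p => A p.val.1 k p.val.2

noncomputable def pairEquiv : Fin 6 ≃ {p : Fin 4 × Fin 4 // p.1 < p.2} :=
  Equiv.ofBijective ![⟨(0, 1), by decide⟩, ⟨(0, 2), by decide⟩, ⟨(0, 3), by decide⟩,
    ⟨(1, 2), by decide⟩, ⟨(1, 3), by decide⟩, ⟨(2, 3), by decide⟩] (by decide)

theorem pairMatrix_submatrix_pairEquiv (A : Fin 4 → Matrix (Fin 4) (Fin 4) K)
    (hswap₁₃ : ∀ i k j, A i k j = -A j k i) (hswap₂₃ : ∀ i k j, A i k j = -A i j k)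
    (hdiag : ∀ i k, A i k i = 0) :
    (pairMatrix A).submatrix id pairEquiv =
      shapeMatrix (A 0 1 2) (A 0 1 3) (A 0 2 3) (A 1 2 3) := by
  ext k l
  fin_cases k <;> fin_cases l <;> simp [pairMatrix, pairEquiv, shapeMatrix] <;> grind

theorem rank_pairMatrix_le (A : Fin 4 → Matrix (Fin 4) (Fin 4) K)
    (hskew : ∀ i, (A i)ᵀ = -(A i)) (hdiag : ∀ i k, A i k i = 0)
    (hrel : ∀ i j : Fin 4, i < j → ∀ k, A i k j = -(A j k i)) :
    (pairMatrix A).rank ≤ 3 := by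
  have hswap₂₃ (i k j : Fin 4) : A i k j = -A i j k := by
    simpa using congrFun (congrFun (hskew i) j) k
  have hswap₁₃ (i k j : Fin 4) : A i k j = -A j k i := by
    rcases lt_trichotomy i j with hij | rfl | hji
    · exact hrel i j hij k
    · simp [hdiag]
    · simp [hrel j i hji k]
  rw [← rank_submatrix (pairMatrix A) (Equiv.refl _) pairEquiv]
  exact pairMatrix_submatrix_pairEquiv A hswap₁₃ hswap₂₃ hdiag ▸
    rank_shapeMatrix_le _ _ _ _

end QuadraticFamily

open QuadraticFamily in
theorem stmt_8_general {K : Type*} [Field K] :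
    (∀ a b c d : K,
      (!![0, 0, 0, -a, -b, -c;
          0, a, b, 0, 0, -d;
          -a, 0, c, 0, d, 0;
          -b, -c, 0, -d, 0, 0] : Matrix (Fin 4) (Fin 6) K).rank ≤ 3) ∧
    ¬ ∃ A : Fin 4 → Matrix (Fin 4) (Fin 4) K,
        (∀ i, (A i)ᵀ = -(A i)) ∧
        (∀ i k, A i k i = 0) ∧
        (∀ i j : Fin 4, i < j → ∀ k, A i k j = -(A j k i)) ∧
        (Matrix.of fun (k : Fin 4) (p : {p : Fin 4 × Fin 4 // p.1 < p.2}) =>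
          A p.val.1 k p.val.2).rank = 4 := by
  refine ⟨rank_shapeMatrix_le, ?_⟩
  rintro ⟨A, hskew, hdiag, hrel, hrank⟩
  have := rank_pairMatrix_le A hskew hdiag hrel
  rw [pairMatrix] at this
  omega

/-- Over a field of characteristic 0, every 4×6 matrix of the shape
`B(A₁,A₂,A₃,A₄)` has rank at most 3; hence there is no 4-quadratic family of matrices
and no reduced quadratic 2-step nilpotent Lie algebra of type 4. -/
theorem stmt_8 {K : Type*} [Field K] [CharZero K] :
    (∀ a b c d : K,
      (!![0, 0, 0, -a, -b, -c;
          0, a, b, 0, 0, -d;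
          -a, 0, c, 0, d, 0;
          -b, -c, 0, -d, 0, 0] : Matrix (Fin 4) (Fin 6) K).rank ≤ 3) ∧
    ¬ ∃ A : Fin 4 → Matrix (Fin 4) (Fin 4) K,
        (∀ i, (A i)ᵀ = -(A i)) ∧
        (∀ i k, A i k i = 0) ∧
        (∀ i j : Fin 4, i < j → ∀ k, A i k j = -(A j k i)) ∧
        (Matrix.of fun (k : Fin 4) (p : {p : Fin 4 × Fin 4 // p.1 < p.2}) =>
          A p.val.1 k p.val.2).rank = 4 :=
  stmt_8_general
end

section
/- For every odd integer d ≥ 3 there exists a d-quadratic family of matrices over any field K of characteristic 0. Concretely, one can choose a skewsymmetric d×d matrix A₁ of rank d−1 with first row and column zero, a skewsymmetric A₂ whose first column is the negative of the second column of A₁, and extend to a family {A₁,…,A_d} satisfying the column compatibility conditions, such that the concatenated matrix B(A₁,…,A_d) has rank d. -/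
open Matrix

/-- A `d`-quadratic family of matrices: each `Aᵢ` skewsymmetric with zero `i`-th column,
for `j > i` the `j`-th column of `Aᵢ` is the negative of the `i`-th column of `A_j`, and the
`d × d(d−1)/2` matrix `B(A₁,…,A_d)` formed by the columns `(j`-th column of `Aᵢ`, `i<j)`
has rank `d`. -/
def IsQuadraticFamily {K : Type*} [Field K] {d : ℕ}
    (A : Fin d → Matrix (Fin d) (Fin d) K) : Prop :=
  (∀ i, (A i)ᵀ = -(A i)) ∧
  (∀ i k, A i k i = 0) ∧
  (∀ i j : Fin d, i < j → ∀ k, A i k j = -(A j k i)) ∧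
  (Matrix.of fun (k : Fin d) (p : {p : Fin d × Fin d // p.1 < p.2}) =>
      A p.val.1 k p.val.2).rank = d

section Construction

variable {K : Type*} [Field K]

/-- The symplectic-type pairing on `Fin d`: `qw i j = 1` if `i` is odd and `j = i+1`,
`-1` if `j` is odd and `i = j+1`, and `0` otherwise. -/
def qw {d : ℕ} (i j : Fin d) : K :=
  if i.val % 2 = 1 ∧ j.val = i.val + 1 then 1
  else if j.val % 2 = 1 ∧ i.val = j.val + 1 then (-1) else 0

lemma qw_antisymm {d : ℕ} (i j : Fin d) : (qw i j : K) = -qw j i := by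
  unfold qw; split_ifs <;> first | (exfalso; omega) | ring

lemma qw_self {d : ℕ} (i : Fin d) : (qw i i : K) = 0 := by
  unfold qw; split_ifs <;> first | rfl | (exfalso; omega)

lemma qw_zero_left {d : ℕ} {i : Fin d} (h : i.val = 0) (j : Fin d) : (qw i j : K) = 0 := by
  unfold qw; split_ifs <;> first | rfl | (exfalso; omega)

lemma qw_zero_right {d : ℕ} {j : Fin d} (h : j.val = 0) (i : Fin d) : (qw i j : K) = 0 := by
  unfold qw; split_ifs <;> first | rfl | (exfalso; omega)

/-- The family of matrices: `qA K d i k j = T i j k` for the alternating tensor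
`T = e₀ ∧ ω` with `ω` given by `qw`. -/
def qA (K : Type*) [Field K] (d : ℕ) : Fin d → Matrix (Fin d) (Fin d) K :=
  fun i => Matrix.of fun k j =>
    (if i.val = 0 then qw j k else 0) + (if j.val = 0 then qw k i else 0) +
      (if k.val = 0 then qw i j else 0)

lemma qA_apply (d : ℕ) (i k j : Fin d) :
    qA K d i k j = (if i.val = 0 then (qw j k : K) else 0) +
      (if j.val = 0 then qw k i else 0) + (if k.val = 0 then qw i j else 0) := rfl

lemma qA_zero_apply {d : ℕ} {i : Fin d} (hi : i.val = 0) (k j : Fin d) :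
    qA K d i k j = (qw j k : K) := by
  rw [qA_apply, if_pos hi, qw_zero_right hi k, qw_zero_left hi j]
  simp

lemma ite_qw_neg {d : ℕ} (c : Prop) [Decidable c] (a b : Fin d) :
    (if c then (qw a b : K) else 0) = -(if c then (qw b a : K) else 0) := by
  split_ifs with h
  · rw [qw_antisymm]
  · rw [neg_zero]

/-- columns of `qw` at odd index -/
lemma qw_col_odd {d : ℕ} {m : Fin d} (h : m.val % 2 = 1) (hm : m.val + 1 < d) :
    (fun k : Fin d => (qw m k : K)) = Pi.single ⟨m.val + 1, hm⟩ 1 := by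
  funext k
  simp only [qw, Pi.single_apply, Fin.ext_iff]
  split_ifs <;> first | rfl | (exfalso; omega)

/-- columns of `qw` at positive even index -/
lemma qw_col_even {d : ℕ} {m : Fin d} (h : m.val % 2 = 0) (h1 : 1 ≤ m.val)
    (hm : m.val - 1 < d) :
    (fun k : Fin d => (qw m k : K)) = Pi.single ⟨m.val - 1, hm⟩ (-1) := by
  funext k
  simp only [qw, Pi.single_apply, Fin.ext_iff]
  split_ifs <;> first | rfl | (exfalso; omega)

/-- rows of `qw` at odd index -/
lemma qw_row_odd {d : ℕ} {m : Fin d} (h : m.val % 2 = 1) (hm : m.val + 1 < d) :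
    (fun k : Fin d => (qw k m : K)) = Pi.single ⟨m.val + 1, hm⟩ (-1) := by
  funext k
  simp only [qw, Pi.single_apply, Fin.ext_iff]
  split_ifs <;> first | rfl | (exfalso; omega)

/-- rows of `qw` at positive even index -/
lemma qw_row_even {d : ℕ} {m : Fin d} (h : m.val % 2 = 0) (h1 : 1 ≤ m.val)
    (hm : m.val - 1 < d) :
    (fun k : Fin d => (qw k m : K)) = Pi.single ⟨m.val - 1, hm⟩ 1 := by
  funext k
  simp only [qw, Pi.single_apply, Fin.ext_iff]
  split_ifs <;> first | rfl | (exfalso; omega)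

end Construction

/-- For every odd `d ≥ 3` there exists a `d`-quadratic family of matrices over
any field of characteristic 0, which may be chosen so that `A₁` is skewsymmetric of rank
`d − 1` with first row and first column zero, and the first column of `A₂` is the negative
of the second column of `A₁`. -/
theorem stmt_9 {K : Type*} [Field K] [CharZero K] (d : ℕ) (hodd : Odd d) (hd : 3 ≤ d) :
    ∃ A : Fin d → Matrix (Fin d) (Fin d) K,
      IsQuadraticFamily A ∧
      (A ⟨0, by omega⟩).rank = d - 1 ∧
      (∀ k, A ⟨0, by omega⟩ k ⟨0, by omega⟩ = 0) ∧
      (∀ k, A ⟨0, by omega⟩ ⟨0, by omega⟩ k = 0) ∧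
      (∀ k, A ⟨1, by omega⟩ k ⟨0, by omega⟩ = -(A ⟨0, by omega⟩ k ⟨1, by omega⟩)) := by
  obtain ⟨t, ht⟩ := hodd
  have h0 : (0 : ℕ) < d := by omega
  refine ⟨qA K d, ⟨?_, ?_, ?_, ?_⟩, ?_, ?_, ?_, ?_⟩
  · -- skewsymmetry
    intro i
    ext k j
    show qA K d i j k = -(qA K d i k j)
    rw [qA_apply, qA_apply, ite_qw_neg (i.val = 0) k j, ite_qw_neg (k.val = 0) j i,
      ite_qw_neg (j.val = 0) i k]
    ring
  · -- i-th column zero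
    intro i k
    rw [qA_apply, qw_self]
    split_ifs with h1 h2 <;> first
      | (rw [qw_antisymm]; ring)
      | ring
  · -- compatibility
    intro i j _ k
    rw [qA_apply, qA_apply, ite_qw_neg (i.val = 0) j k, ite_qw_neg (j.val = 0) k i,
      ite_qw_neg (k.val = 0) i j]
    ring
  · -- rank of B is d
    set B : Matrix (Fin d) {p : Fin d × Fin d // p.1 < p.2} K :=
      Matrix.of fun k p => qA K d p.val.1 k p.val.2 with hB
    have hcol : ∀ k : Fin d, Pi.single k (1 : K) ∈ LinearMap.range B.mulVecLin := by
      intro k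
      have hklt : k.val < d := k.isLt
      rcases Nat.eq_zero_or_pos k.val with hk0 | hkpos
      · -- use column (1,2)
        refine ⟨Pi.single ⟨(⟨1, by omega⟩, ⟨2, by omega⟩), Fin.mk_lt_mk.mpr (by omega)⟩ 1, ?_⟩
        rw [Matrix.mulVecLin_apply, Matrix.mulVec_single]
        funext k'
        simp only [Pi.smul_apply, Matrix.col_apply, op_smul_eq_mul]
        simp only [hB, Matrix.of_apply]
        rw [qA_apply, mul_one, Pi.single_apply]
        simp only [qw, Fin.ext_iff]
        norm_num
        split_ifs <;> first | rfl | (exfalso; omega)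
      · rcases Nat.mod_two_eq_zero_or_one k.val with hke | hko
        · -- k even positive: column (0, k-1) equals e_k
          have hm : k.val - 1 < d := by omega
          refine ⟨Pi.single ⟨(⟨0, h0⟩, ⟨k.val - 1, hm⟩), Fin.mk_lt_mk.mpr (by omega)⟩ 1, ?_⟩
          rw [Matrix.mulVecLin_apply, Matrix.mulVec_single]
          funext k'
          simp only [Pi.smul_apply, Matrix.col_apply, op_smul_eq_mul]
          simp only [hB, Matrix.of_apply]
          rw [qA_zero_apply rfl, mul_one]
          have h2 : k.val - 1 + 1 < d := by omega
          have := congrFun (qw_col_odd (K := K) (m := ⟨k.val - 1, hm⟩) (show (k.val - 1) % 2 = 1 by omega) h2) k'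
          rw [this]
          congr 1
          exact Fin.ext (show k.val - 1 + 1 = k.val by omega)
        · -- k odd: column (0, k+1) equals -e_k
          have hm : k.val + 1 < d := by omega
          refine ⟨Pi.single ⟨(⟨0, h0⟩, ⟨k.val + 1, hm⟩), Fin.mk_lt_mk.mpr (by omega)⟩ (-1), ?_⟩
          rw [Matrix.mulVecLin_apply, Matrix.mulVec_single]
          funext k'
          simp only [Pi.smul_apply, Matrix.col_apply, op_smul_eq_mul]
          simp only [hB, Matrix.of_apply]
          rw [qA_zero_apply rfl]
          have h2 : k.val + 1 - 1 < d := by omega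
          have := congrFun (qw_col_even (K := K) (m := ⟨k.val + 1, hm⟩) (show (k.val + 1) % 2 = 0 by omega) (show 1 ≤ k.val + 1 by omega) h2) k'
          rw [this]
          have hjj : (⟨k.val + 1 - 1, h2⟩ : Fin d) = k := Fin.ext (show k.val + 1 - 1 = k.val by omega)
          rw [hjj, Pi.single_apply, Pi.single_apply]
          split_ifs <;> ring
    have hr : LinearMap.range B.mulVecLin = ⊤ := by
      rw [eq_top_iff]
      intro v _
      have hv : ∑ k, Pi.single k (v k) = v := Finset.univ_sum_single v
      rw [← hv]
      refine Submodule.sum_mem _ fun k _ => ?_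
      have hsingle : Pi.single k (v k) = v k • (Pi.single k (1 : K) : Fin d → K) := by
        funext j
        simp [Pi.single_apply, mul_ite]
      rw [hsingle]
      exact Submodule.smul_mem _ _ (hcol k)
    show B.rank = d
    rw [Matrix.rank, hr, finrank_top, Module.finrank_fin_fun]
  · -- rank of A₀ is d - 1
    have hne : (Pi.single (⟨0, h0⟩ : Fin d) (1 : K) : Fin d → K) ≠ 0 := by
      intro h
      have := congrFun h ⟨0, h0⟩
      simp at this
    have hker : LinearMap.ker (qA K d ⟨0, h0⟩).mulVecLin =
        Submodule.span K {Pi.single (⟨0, h0⟩ : Fin d) (1 : K)} := by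
      apply le_antisymm
      · intro v hv
        rw [LinearMap.mem_ker, Matrix.mulVecLin_apply] at hv
        rw [Submodule.mem_span_singleton]
        refine ⟨v ⟨0, h0⟩, ?_⟩
        funext j
        have hjlt : j.val < d := j.isLt
        have hrow : ∀ k : Fin d, (fun j' => qA K d ⟨0, h0⟩ k j') = fun j' => (qw j' k : K) :=
          fun k => funext fun j' => qA_zero_apply rfl k j'
        have key : j.val ≠ 0 → v j = 0 := by
          intro hj
          rcases Nat.mod_two_eq_zero_or_one j.val with hje | hjo
          · -- j even positive; use row k = j - 1 (odd)
            have hm : j.val - 1 < d := by omega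
            have hkk : j.val - 1 + 1 < d := by omega
            have := congrFun hv ⟨j.val - 1, hm⟩
            have heq : (qA K d ⟨0, h0⟩ *ᵥ v) ⟨j.val - 1, hm⟩ =
                (fun j' => qA K d ⟨0, h0⟩ ⟨j.val - 1, hm⟩ j') ⬝ᵥ v := rfl
            rw [heq, hrow] at this
            rw [qw_row_odd (K := K) (m := ⟨j.val - 1, hm⟩) (show (j.val - 1) % 2 = 1 by omega) hkk] at this
            rw [single_dotProduct] at this
            have hjj : (⟨j.val - 1 + 1, hkk⟩ : Fin d) = j := Fin.ext (show j.val - 1 + 1 = j.val by omega)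
            rw [hjj] at this
            have h0' : (0 : Fin d → K) ⟨j.val - 1, hm⟩ = 0 := rfl
            rw [h0'] at this
            simpa using this
          · -- j odd; use row k = j + 1 (even)
            have hm : j.val + 1 < d := by omega
            have hkk : j.val + 1 - 1 < d := by omega
            have := congrFun hv ⟨j.val + 1, hm⟩
            have heq : (qA K d ⟨0, h0⟩ *ᵥ v) ⟨j.val + 1, hm⟩ =
                (fun j' => qA K d ⟨0, h0⟩ ⟨j.val + 1, hm⟩ j') ⬝ᵥ v := rfl
            rw [heq, hrow] at this
            rw [qw_row_even (K := K) (m := ⟨j.val + 1, hm⟩) (show (j.val + 1) % 2 = 0 by omega) (show 1 ≤ j.val + 1 by omega) hkk] at this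
            rw [single_dotProduct] at this
            have hjj : (⟨j.val + 1 - 1, hkk⟩ : Fin d) = j := Fin.ext (show j.val + 1 - 1 = j.val by omega)
            rw [hjj] at this
            have h0' : (0 : Fin d → K) ⟨j.val + 1, hm⟩ = 0 := rfl
            rw [h0'] at this
            simpa using this
        rcases Nat.eq_zero_or_pos j.val with hj0 | hjpos
        · have hj : j = ⟨0, h0⟩ := Fin.ext (show j.val = 0 by omega)
          subst hj
          simp [Pi.single_apply]
        · rw [key (by omega)]
          rw [Pi.smul_apply, Pi.single_apply, if_neg (by
            intro h; rw [h] at hjpos; simp at hjpos)]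
          simp
      · rw [Submodule.span_le, Set.singleton_subset_iff]
        rw [SetLike.mem_coe, LinearMap.mem_ker, Matrix.mulVecLin_apply,
          Matrix.mulVec_single]
        funext k
        simp only [Pi.smul_apply, Matrix.col_apply, op_smul_eq_mul]
        rw [qA_zero_apply rfl, qw_zero_left rfl, zero_mul]
        rfl
    have h2 := LinearMap.finrank_range_add_finrank_ker (qA K d ⟨0, h0⟩).mulVecLin
    rw [hker, finrank_span_singleton hne, Module.finrank_fin_fun] at h2
    show Matrix.rank _ = d - 1
    rw [Matrix.rank]
    omega
  · intro k
    rw [qA_zero_apply rfl, qw_zero_left rfl]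
  · intro k
    rw [qA_zero_apply rfl, qw_zero_right rfl]
  · intro k
    have hR : qA K d ⟨0, by omega⟩ k ⟨1, by omega⟩ = (qw ⟨1, by omega⟩ k : K) :=
      qA_zero_apply (i := ⟨0, by omega⟩) rfl k ⟨1, by omega⟩
    rw [hR, qA_apply, if_neg (Nat.one_ne_zero), if_pos rfl]
    rcases Nat.eq_zero_or_pos k.val with hk0 | hkpos
    · rw [if_pos hk0, qw_zero_right (j := (⟨0, h0⟩ : Fin d)) rfl,
        qw_zero_left (i := k) hk0, qw_zero_right (j := k) hk0]
      ring
    · rw [if_neg (by omega)]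
      rw [qw_antisymm]
      ring
end

section
/- For every integer d ≥ 3 with d ≠ 4 there exists a d-quadratic family of matrices over any field K of characteristic 0; consequently, there exist reduced quadratic 2-step nilpotent Lie algebras of type d for all d ≥ 3, d ≠ 4. -/
open Matrix

def trip (d a b c : ℕ) : Prop :=
  (b = a + 1 ∧ c = a + 2 ∧ a % 2 = 0 ∧ c < d) ∨
  (d % 2 = 0 ∧ 6 ≤ d ∧ a = 1 ∧ b = 3 ∧ c = d - 1)

instance (d a b c : ℕ) : Decidable (trip d a b c) := by unfold trip; infer_instance

def gg (K : Type*) [Field K] (d a b c : ℕ) : K := if trip d a b c then 1 else 0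

def cc (K : Type*) [Field K] (d i j k : ℕ) : K :=
  gg K d i j k - gg K d i k j + gg K d j k i - gg K d j i k + gg K d k i j - gg K d k j i

set_option linter.unusedSectionVars false

section Aux

variable {K : Type*} [Field K] [CharZero K]

lemma cc_swap12 (d i j k : ℕ) : cc K d j i k = - cc K d i j k := by unfold cc; ring

lemma cc_swap23 (d i j k : ℕ) : cc K d i k j = - cc K d i j k := by unfold cc; ring

lemma cc_swap13 (d i j k : ℕ) : cc K d k j i = - cc K d i j k := by unfold cc; ring

lemma cc_cyc (d i j k : ℕ) : cc K d i j k = cc K d j k i := by unfold cc; ring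

lemma cc_diag13 (d i j : ℕ) : cc K d i j i = 0 := by
  have h := cc_swap13 (K := K) d i j i
  have h2 : (2 : K) * cc K d i j i = 0 := by linear_combination h
  rcases mul_eq_zero.mp h2 with h3 | h3
  · exact absurd h3 two_ne_zero
  · exact h3

lemma cc_eq_zero (d i a b : ℕ) (h1 : ¬trip d i a b) (h2 : ¬trip d i b a)
    (h3 : ¬trip d a b i) (h4 : ¬trip d a i b) (h5 : ¬trip d b i a) (h6 : ¬trip d b a i) :
    cc K d i a b = 0 := by
  unfold cc gg
  rw [if_neg h1, if_neg h2, if_neg h3, if_neg h4, if_neg h5, if_neg h6]; ring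

lemma cc_first (d i a b : ℕ) (h1 : trip d i a b) (h2 : ¬trip d i b a)
    (h3 : ¬trip d a b i) (h4 : ¬trip d a i b) (h5 : ¬trip d b i a) (h6 : ¬trip d b a i) :
    cc K d i a b = 1 := by
  unfold cc gg
  rw [if_pos h1, if_neg h2, if_neg h3, if_neg h4, if_neg h5, if_neg h6]; ring

lemma cc_third (d i a b : ℕ) (h1 : ¬trip d i a b) (h2 : ¬trip d i b a)
    (h3 : trip d a b i) (h4 : ¬trip d a i b) (h5 : ¬trip d b i a) (h6 : ¬trip d b a i) :
    cc K d i a b = 1 := by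
  unfold cc gg
  rw [if_neg h1, if_neg h2, if_pos h3, if_neg h4, if_neg h5, if_neg h6]; ring

lemma cc_fourth (d i a b : ℕ) (h1 : ¬trip d i a b) (h2 : ¬trip d i b a)
    (h3 : ¬trip d a b i) (h4 : trip d a i b) (h5 : ¬trip d b i a) (h6 : ¬trip d b a i) :
    cc K d i a b = -1 := by
  unfold cc gg
  rw [if_neg h1, if_neg h2, if_neg h3, if_pos h4, if_neg h5, if_neg h6]; ring

lemma key (d m : ℕ) (hd : 3 ≤ d) (hd4 : d ≠ 4) (hm : m < d) :
    ∃ a b : ℕ, a < b ∧ b < d ∧ (∀ i, i ≠ m → cc K d i a b = 0) ∧ cc K d m a b ≠ 0 := by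
  rcases Nat.even_or_odd m with hme | hmo
  · rw [Nat.even_iff] at hme
    by_cases h2 : m + 2 < d
    · refine ⟨m + 1, m + 2, by omega, by omega, fun i hi => ?_, ?_⟩
      · exact cc_eq_zero _ _ _ _ (by unfold trip; omega) (by unfold trip; omega)
          (by unfold trip; omega) (by unfold trip; omega) (by unfold trip; omega)
          (by unfold trip; omega)
      · rw [cc_first _ _ _ _ (by unfold trip; omega) (by unfold trip; omega)
          (by unfold trip; omega) (by unfold trip; omega) (by unfold trip; omega)
          (by unfold trip; omega)]
        norm_num
    · refine ⟨m - 2, m - 1, by omega, by omega, fun i hi => ?_, ?_⟩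
      · exact cc_eq_zero _ _ _ _ (by unfold trip; omega) (by unfold trip; omega)
          (by unfold trip; omega) (by unfold trip; omega) (by unfold trip; omega)
          (by unfold trip; omega)
      · rw [cc_third _ _ _ _ (by unfold trip; omega) (by unfold trip; omega)
          (by unfold trip; omega) (by unfold trip; omega) (by unfold trip; omega)
          (by unfold trip; omega)]
        norm_num
  · rw [Nat.odd_iff] at hmo
    by_cases h1 : m + 1 < d
    · refine ⟨m - 1, m + 1, by omega, by omega, fun i hi => ?_, ?_⟩
      · exact cc_eq_zero _ _ _ _ (by unfold trip; omega) (by unfold trip; omega)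
          (by unfold trip; omega) (by unfold trip; omega) (by unfold trip; omega)
          (by unfold trip; omega)
      · rw [cc_fourth _ _ _ _ (by unfold trip; omega) (by unfold trip; omega)
          (by unfold trip; omega) (by unfold trip; omega) (by unfold trip; omega)
          (by unfold trip; omega)]
        norm_num
    · refine ⟨1, 3, by omega, by omega, fun i hi => ?_, ?_⟩
      · exact cc_eq_zero _ _ _ _ (by unfold trip; omega) (by unfold trip; omega)
          (by unfold trip; omega) (by unfold trip; omega) (by unfold trip; omega)
          (by unfold trip; omega)
      · rw [cc_third _ _ _ _ (by unfold trip; omega) (by unfold trip; omega)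
          (by unfold trip; omega) (by unfold trip; omega) (by unfold trip; omega)
          (by unfold trip; omega)]
        norm_num


end Aux

def Afam (K : Type*) [Field K] (d : ℕ) : Fin d → Matrix (Fin d) (Fin d) K :=
  fun i => Matrix.of fun k j => cc K d i k j



/-- The 2-step nilpotent bracket associated to a family of matrices, on the space with
basis `{v₁,…,v_d, z₁,…,z_d}`: `[zᵢ,·] = 0`, `[vᵢ,v_j] = Σ_k a^i_{kj} z_k`, extended
bilinearly. -/
def nBracket {K : Type*} [Field K] {d : ℕ} (A : Fin d → Matrix (Fin d) (Fin d) K)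
    (p q : (Fin d → K) × (Fin d → K)) : (Fin d → K) × (Fin d → K) :=
  (0, fun k => ∑ i, ∑ j, p.1 i * q.1 j * A i k j)

/-- The hyperbolic bilinear form with matrix `[[0, I],[I, 0]]` in the basis
`{v₁,…,v_d, z₁,…,z_d}`. -/
def hypForm {K : Type*} [Field K] {d : ℕ}
    (p q : (Fin d → K) × (Fin d → K)) : K :=
  ∑ i, (p.1 i * q.2 i + p.2 i * q.1 i)

/-- For every `d ≥ 3`, `d ≠ 4`, there exists a `d`-quadratic family over any
field of characteristic 0; consequently the associated algebra is a reduced quadratic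
2-step nilpotent Lie algebra of type `d`. -/
theorem stmt_10 {K : Type*} [Field K] [CharZero K] (d : ℕ) (hd : 3 ≤ d) (hd4 : d ≠ 4) :
    ∃ A : Fin d → Matrix (Fin d) (Fin d) K,
      IsQuadraticFamily A ∧
      -- anticommutativity and 2-step nilpotency of the associated bracket
      (∀ p q, nBracket A p q = - nBracket A q p) ∧
      (∀ p q r, nBracket A (nBracket A p q) r = 0) ∧
      -- the hyperbolic form is symmetric, nondegenerate and invariant: quadratic
      (∀ p q : (Fin d → K) × (Fin d → K), hypForm p q = hypForm q p) ∧
      (∀ p : (Fin d → K) × (Fin d → K), (∀ q, hypForm p q = 0) → p = 0) ∧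
      (∀ p q r, hypForm (nBracket A p q) r = hypForm p (nBracket A q r)) ∧
      -- the derived subalgebra is span{z₁,…,z_d} and equals the center: reduced
      Submodule.span K {x | ∃ p q, nBracket A p q = x}
        = Submodule.prod (⊥ : Submodule K (Fin d → K)) (⊤ : Submodule K (Fin d → K)) ∧
      {p | ∀ q, nBracket A p q = 0}
        = (Submodule.prod (⊥ : Submodule K (Fin d → K))
            (⊤ : Submodule K (Fin d → K)) : Set _) ∧
      -- type d: dim n − dim [n,n] = d
      Module.finrank K ((Fin d → K) × (Fin d → K))
        - Module.finrank K (Submodule.span K {x | ∃ p q, nBracket A p q = x}) = d := by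
  have KEY : ∀ m : Fin d, ∃ ab : Fin d × Fin d, ab.1 < ab.2 ∧ ∃ s : K, s ≠ 0 ∧
      ∀ i : Fin d, cc K d i ab.1 ab.2 = if i = m then s else 0 := by
    intro m
    obtain ⟨a, b, hab, hbd, hz, hnz⟩ := key (K := K) d m hd hd4 m.isLt
    refine ⟨(⟨a, lt_trans hab hbd⟩, ⟨b, hbd⟩), hab, cc K d m a b, hnz, fun i => ?_⟩
    by_cases h : i = (⟨m, m.isLt⟩ : Fin d)
    · subst h; simp
    · rw [if_neg (by simpa using h), hz i (by simpa [Fin.ext_iff] using h)]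
  -- the collapsed bracket on basis vectors
  have hbr : ∀ (a b : Fin d) (k : Fin d),
      (∑ i, ∑ j, (Pi.single a 1 : Fin d → K) i * (Pi.single b 1 : Fin d → K) j * cc K d i k j)
        = cc K d a k b := by
    intro a b k
    rw [Finset.sum_eq_single a]
    · rw [Finset.sum_eq_single b]
      · simp
      · intro j _ hj; simp [Pi.single_apply, hj]
      · simp
    · intro i _ hi; simp [Pi.single_apply, hi]
    · simp
  -- span equality, proven first so it can be reused
  have hcol : ∀ (m : Fin d) (ab : Fin d × Fin d) (s : K),
      (∀ i : Fin d, cc K d i ab.1 ab.2 = if i = m then s else 0) →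
      ∀ k : Fin d, cc K d ab.1 k ab.2 = if k = m then -s else 0 := by
    intro m ab s hval k
    rw [cc_swap12 d k ab.1 ab.2, hval k]
    split <;> simp
  have hbr2 : ∀ (b k : Fin d) (p : (Fin d → K) × (Fin d → K)),
      (nBracket (Afam K d) p (Pi.single b 1, 0)).2 k = ∑ i, p.1 i * cc K d i k b := by
    intro b k p
    simp only [nBracket, Afam, Matrix.of_apply]
    refine Finset.sum_congr rfl fun i _ => ?_
    rw [Finset.sum_eq_single b]
    · simp
    · intro j _ hj; simp [Pi.single_apply, hj]
    · simp
  have hsingle : ∀ m : Fin d,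
      ((0 : Fin d → K), (Pi.single m 1 : Fin d → K))
        ∈ Submodule.span K {x | ∃ p q, nBracket (Afam K d) p q = x} := by
    intro m
    obtain ⟨ab, hlt, s, hs, hval⟩ := KEY m
    have hmem : ((0 : Fin d → K), (Pi.single m (-s) : Fin d → K))
        ∈ {x | ∃ p q, nBracket (Afam K d) p q = x} := by
      refine ⟨(Pi.single ab.1 1, 0), (Pi.single ab.2 1, 0), ?_⟩
      refine Prod.ext rfl ?_
      funext k
      show (∑ i, ∑ j, (Pi.single ab.1 1 : Fin d → K) i * (Pi.single ab.2 1 : Fin d → K) j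
        * (Afam K d i k j)) = _
      have := hbr ab.1 ab.2 k
      simp only [Afam, Matrix.of_apply] at this ⊢
      rw [this, hcol m ab s hval k, Pi.single_apply]
    have heq : ((0 : Fin d → K), (Pi.single m 1 : Fin d → K))
        = (-s)⁻¹ • ((0 : Fin d → K), (Pi.single m (-s) : Fin d → K)) := by
      refine Prod.ext (by simp) ?_
      show (Pi.single m 1 : Fin d → K) = (-s)⁻¹ • (Pi.single m (-s) : Fin d → K)
      rw [← Pi.single_smul, smul_eq_mul, inv_mul_cancel₀ (neg_ne_zero.mpr hs)]
    rw [heq]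
    exact Submodule.smul_mem _ _ (Submodule.subset_span hmem)
  have hspan : Submodule.span K {x | ∃ p q, nBracket (Afam K d) p q = x}
      = Submodule.prod (⊥ : Submodule K (Fin d → K)) (⊤ : Submodule K (Fin d → K)) := by
    apply le_antisymm
    · rw [Submodule.span_le]
      rintro x ⟨p, q, rfl⟩
      simp [Submodule.mem_prod, nBracket, Submodule.mem_bot]
    · intro x hx
      have hx1 : x.1 = 0 := by simpa [Submodule.mem_bot] using (Submodule.mem_prod.mp hx).1
      have hxeq : x = ∑ m, x.2 m • ((0 : Fin d → K), (Pi.single m 1 : Fin d → K)) := by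
        refine Prod.ext ?_ ?_
        · rw [hx1, Prod.fst_sum]
          simp
        · rw [Prod.snd_sum]
          have hsm : ∀ m : Fin d,
              (x.2 m • ((0 : Fin d → K), (Pi.single m 1 : Fin d → K))).2
                = Pi.single m (x.2 m) := by
            intro m
            show x.2 m • (Pi.single m 1 : Fin d → K) = _
            rw [← Pi.single_smul, smul_eq_mul, mul_one]
          rw [Finset.sum_congr rfl fun m _ => hsm m]
          exact (Finset.univ_sum_single x.2).symm
      rw [hxeq]
      exact Submodule.sum_mem _ fun m _ => Submodule.smul_mem _ _ (hsingle m)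
  refine ⟨Afam K d, ⟨?_, ?_, ?_, ?_⟩, ?_, ?_, ?_, ?_, ?_, ?_, ?_, ?_⟩
  · -- transpose
    intro i; ext k j
    simp only [transpose_apply, Afam, Matrix.of_apply, Matrix.neg_apply]
    rw [cc_swap23]
  · -- diagonal column zero
    intro i k
    simp only [Afam, Matrix.of_apply]
    exact cc_diag13 d i k
  · -- skew pairing
    intro i j _ k
    simp only [Afam, Matrix.of_apply]
    rw [cc_swap13 d j k i]
  · -- rank
    show (Matrix.of fun (k : Fin d) (p : {p : Fin d × Fin d // p.1 < p.2}) =>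
      Afam K d p.val.1 k p.val.2).rank = d
    set B := Matrix.of fun (k : Fin d) (p : {p : Fin d × Fin d // p.1 < p.2}) =>
      Afam K d p.val.1 k p.val.2 with hB
    have hr : LinearMap.range B.mulVecLin = ⊤ := by
      rw [eq_top_iff]
      intro v _
      have hv : v = ∑ m, Pi.single m (v m) := (Finset.univ_sum_single v).symm
      rw [hv]
      refine Submodule.sum_mem _ fun m _ => ?_
      obtain ⟨ab, hlt, s, hs, hval⟩ := KEY m
      refine ⟨Pi.single ⟨ab, hlt⟩ ((-s)⁻¹ * v m), ?_⟩
      rw [Matrix.mulVecLin_apply, Matrix.mulVec_single]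
      funext k
      have hBk : B k ⟨ab, hlt⟩ = if k = m then -s else 0 := by
        show cc K d ab.1 k ab.2 = _
        exact hcol m ab s hval k
      show B k ⟨ab, hlt⟩ * ((-s)⁻¹ * v m) = (Pi.single m (v m) : Fin d → K) k
      rw [hBk, Pi.single_apply]
      split
      · field_simp
      · simp
    show B.rank = d
    rw [show B.rank = Module.finrank K (LinearMap.range B.mulVecLin) from rfl, hr,
      finrank_top, Module.finrank_fin_fun]
  · -- anticommutativity
    intro p q
    have : ∀ k, (∑ i, ∑ j, p.1 i * q.1 j * cc K d i k j)
        = -∑ i, ∑ j, q.1 i * p.1 j * cc K d i k j := by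
      intro k
      rw [Finset.sum_comm, ← Finset.sum_neg_distrib]
      refine Finset.sum_congr rfl fun j _ => ?_
      rw [← Finset.sum_neg_distrib]
      refine Finset.sum_congr rfl fun i _ => ?_
      rw [cc_swap13 d j k i]; ring
    refine Prod.ext (by simp [nBracket]) ?_
    funext k
    simpa [nBracket, Afam] using this k
  · -- 2-step nilpotency
    intro p q r
    refine Prod.ext (by simp [nBracket]) ?_
    funext k
    simp [nBracket]
  · -- symmetry of hypForm
    intro p q
    unfold hypForm
    refine Finset.sum_congr rfl fun i _ => by ring
  · -- nondegeneracy
    intro p h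
    refine Prod.ext (funext fun i => ?_) (funext fun i => ?_)
    · have := h (0, Pi.single i 1)
      simpa [hypForm, Pi.single_apply, mul_ite, Finset.sum_ite_eq'] using this
    · have := h (Pi.single i 1, 0)
      simpa [hypForm, Pi.single_apply, mul_ite, Finset.sum_ite_eq'] using this
  · -- invariance
    intro p q r
    simp only [hypForm, nBracket, Afam, Matrix.of_apply, Pi.zero_apply, zero_mul, mul_zero,
      zero_add, add_zero]
    calc ∑ k : Fin d, (∑ i : Fin d, ∑ j : Fin d, p.1 i * q.1 j * cc K d (i:ℕ) (k:ℕ) (j:ℕ)) * r.1 k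
        = ∑ k : Fin d, ∑ i : Fin d, ∑ j : Fin d, p.1 i * q.1 j * cc K d (i:ℕ) (k:ℕ) (j:ℕ) * r.1 k := by
          refine Finset.sum_congr rfl fun k _ => ?_
          rw [Finset.sum_mul]
          exact Finset.sum_congr rfl fun i _ => by rw [Finset.sum_mul]
      _ = ∑ i : Fin d, ∑ k : Fin d, ∑ j : Fin d, p.1 i * q.1 j * cc K d (i:ℕ) (k:ℕ) (j:ℕ) * r.1 k := Finset.sum_comm
      _ = ∑ i : Fin d, ∑ j : Fin d, ∑ k : Fin d, p.1 i * q.1 j * cc K d (i:ℕ) (k:ℕ) (j:ℕ) * r.1 k := by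
          exact Finset.sum_congr rfl fun i _ => Finset.sum_comm
      _ = ∑ i : Fin d, p.1 i * ∑ j : Fin d, ∑ k : Fin d, q.1 j * r.1 k * cc K d (j:ℕ) (i:ℕ) (k:ℕ) := by
          refine Finset.sum_congr rfl fun i _ => ?_
          rw [Finset.mul_sum]
          refine Finset.sum_congr rfl fun j _ => ?_
          rw [Finset.mul_sum]
          refine Finset.sum_congr rfl fun k _ => ?_
          rw [cc_cyc d (j:ℕ) (i:ℕ) (k:ℕ)]
          ring
  · -- span = bot.prod top
    exact hspan
  · -- center
    ext p
    simp only [Set.mem_setOf_eq, SetLike.mem_coe, Submodule.mem_prod, Submodule.mem_bot,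
      Submodule.mem_top, and_true]
    constructor
    · intro h
      funext m
      obtain ⟨ab, hlt, s, hs, hval⟩ := KEY m
      have h2 : (nBracket (Afam K d) p (Pi.single ab.2 1, 0)).2 ab.1 = 0 := by
        rw [h (Pi.single ab.2 1, 0)]; rfl
      rw [hbr2 ab.2 ab.1 p] at h2
      have h3 : (∑ i, p.1 i * cc K d i ab.1 ab.2) = p.1 m * s := by
        rw [Finset.sum_congr rfl fun i _ => by rw [hval i]]
        simp [mul_ite, Finset.sum_ite_eq']
      rw [h3] at h2
      show p.1 m = (0 : Fin d → K) m
      rw [Pi.zero_apply]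
      rcases mul_eq_zero.mp h2 with h4 | h4
      · exact h4
      · exact absurd h4 hs
    · intro h1 q
      refine Prod.ext rfl ?_
      funext k
      show (∑ i, ∑ j, p.1 i * q.1 j * Afam K d i k j) = 0
      have : ∀ i : Fin d, p.1 i = 0 := fun i => by rw [h1]; rfl
      simp [this]
  · -- finrank
    rw [hspan]
    have h1 : Submodule.prod (⊥ : Submodule K (Fin d → K)) (⊤ : Submodule K (Fin d → K))
        = LinearMap.range (LinearMap.inr K (Fin d → K) (Fin d → K)) := by
      rw [LinearMap.range_eq_map, Submodule.map_inr]
    rw [h1, LinearMap.finrank_range_of_inj LinearMap.inr_injective,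
      Module.finrank_prod, Module.finrank_fin_fun]
    omega
end

section
/- Let {A₁,…,A_d} be a d-quadratic family of matrices over a field K of characteristic 0, with Aᵢ = (a^i_{kj}). Define on the 2d-dimensional space with basis {v₁,…,v_d, z₁,…,z_d} the bracket [zᵢ, x] = 0 for all x, and [vᵢ, v_j] = Σ_{k=1}^d a^i_{kj} z_k. Then this bracket is anticommutative (using properties (2) and (3) of the family), satisfies the Jacobi identity, and makes the space a 2-step nilpotent Lie algebra whose derived subalgebra is span{z₁,…,z_d}, of type d. -/
open Matrix

/-- given a `d`-quadratic family `{A₁,…,A_d}`, the bracket `[zᵢ,x] = 0`,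
`[vᵢ,v_j] = Σ_k a^i_{kj} z_k` on the `2d`-dimensional space with basis
`{v₁,…,v_d, z₁,…,z_d}` is anticommutative, satisfies the Jacobi identity, and yields a
2-step nilpotent Lie algebra with derived subalgebra `span{z₁,…,z_d}`, of type `d`. -/
theorem stmt_11 {K : Type*} [Field K] [CharZero K] {d : ℕ}
    (A : Fin d → Matrix (Fin d) (Fin d) K) (hA : IsQuadraticFamily A) :
    -- anticommutativity
    (∀ p q, nBracket A p q = - nBracket A q p) ∧
    -- Jacobi identity
    (∀ p q r, nBracket A (nBracket A p q) r + nBracket A (nBracket A q r) p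
        + nBracket A (nBracket A r p) q = 0) ∧
    -- 2-step nilpotency
    (∀ p q r, nBracket A (nBracket A p q) r = 0) ∧
    -- the derived subalgebra is span{z₁,…,z_d}
    Submodule.span K {x | ∃ p q, nBracket A p q = x}
      = Submodule.prod (⊥ : Submodule K (Fin d → K)) (⊤ : Submodule K (Fin d → K)) ∧
    -- the algebra has type d
    Module.finrank K ((Fin d → K) × (Fin d → K))
      - Module.finrank K (Submodule.span K {x | ∃ p q, nBracket A p q = x}) = d := by
  obtain ⟨h1, h2, h3, h4⟩ := hA
  -- full skew-symmetry in the family indices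
  have hskew : ∀ i j k, A i k j = -(A j k i) := by
    intro i j k
    rcases lt_trichotomy i j with h | h | h
    · exact h3 i j h k
    · subst h; rw [h2 i k, neg_zero]
    · rw [h3 j i h k, neg_neg]
  -- nilpotency (used also for Jacobi)
  have hnil : ∀ p q r, nBracket A (nBracket A p q) r = 0 := by
    intro p q r
    simp only [nBracket, Prod.mk_eq_zero]
    refine ⟨trivial, ?_⟩
    funext k
    simp
  set B : Matrix (Fin d) {p : Fin d × Fin d // p.1 < p.2} K :=
    Matrix.of fun k p => A p.val.1 k p.val.2 with hB
  have hcols : Submodule.span K (Set.range Bᵀ) = ⊤ := by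
    rw [show Set.range Bᵀ = Set.range B.col from rfl, ← Matrix.range_mulVecLin]
    apply Submodule.eq_top_of_finrank_eq
    rw [← Matrix.rank, h4, Module.finrank_pi, Fintype.card_fin]
  have key : Submodule.span K {x | ∃ p q, nBracket A p q = x}
      = Submodule.prod (⊥ : Submodule K (Fin d → K)) (⊤ : Submodule K (Fin d → K)) := by
    apply le_antisymm
    · rw [Submodule.span_le]
      rintro x ⟨p, q, rfl⟩
      exact ⟨rfl, trivial⟩
    · rintro ⟨x1, x2⟩ ⟨hx1, -⟩
      simp only [Submodule.mem_bot] at hx1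
      subst hx1
      have hx2 : x2 ∈ Submodule.span K (Set.range Bᵀ) := by rw [hcols]; trivial
      have := Submodule.mem_map_of_mem
        (f := LinearMap.inr K (Fin d → K) (Fin d → K)) hx2
      rw [Submodule.map_span] at this
      refine Submodule.span_mono ?_ this
      rintro y ⟨c, ⟨⟨⟨i, j⟩, hij⟩, rfl⟩, rfl⟩
      refine ⟨(Pi.single i 1, 0), (Pi.single j 1, 0), ?_⟩
      simp only [nBracket, LinearMap.coe_inr]
      refine Prod.ext rfl ?_
      funext k
      simp [Pi.single_apply, Finset.sum_ite_eq', hB]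
  refine ⟨?_, ?_, hnil, key, ?_⟩
  · -- anticommutativity
    intro p q
    simp only [nBracket, Prod.neg_mk, neg_zero]
    refine Prod.ext rfl ?_
    funext k
    calc ∑ i, ∑ j, p.1 i * q.1 j * A i k j
        = ∑ i, ∑ j, -(q.1 j * p.1 i * A j k i) := by
          refine Finset.sum_congr rfl fun i _ => Finset.sum_congr rfl fun j _ => ?_
          rw [hskew i j k]; ring
      _ = -∑ j, ∑ i, q.1 j * p.1 i * A j k i := by
          rw [Finset.sum_comm]; simp
      _ = (-fun k => ∑ i, ∑ j, q.1 i * p.1 j * A i k j) k := rfl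
  · -- Jacobi
    intro p q r
    rw [hnil, hnil, hnil]
    simp
  · rw [key]
    have hrange : Submodule.prod (⊥ : Submodule K (Fin d → K)) (⊤ : Submodule K (Fin d → K))
        = LinearMap.range (LinearMap.inr K (Fin d → K) (Fin d → K)) := by
      ext ⟨x1, x2⟩
      simp [Submodule.mem_prod, Prod.ext_iff, eq_comm]
    rw [hrange, LinearMap.finrank_range_of_inj (LinearMap.inr_injective),
      Module.finrank_prod, Module.finrank_pi, Fintype.card_fin]
    omega
end

section
/- With the hypotheses of the preceding construction, the bilinear form φ defined by φ(vᵢ, z_j) = δ_{ij}, φ(vᵢ, v_j) = φ(zᵢ, z_j) = 0 (extended bilinearly) is symmetric, nondegenerate, and invariant on the Lie algebra n(A₁,…,A_d); hence (n(A₁,…,A_d), φ) is a quadratic 2-step nilpotent Lie algebra. -/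
open Matrix

/-! Symmetry and nondegeneracy are immediate for the hyperbolic form. Expanding both sides,
invariance says exactly that the structure constants are invariant under the cyclic shift
`a^i_{kj} = a^j_{ik}` of their indices, and for a quadratic family this shift is the composite
of the two antisymmetries `a^i_{kj} = -a^i_{jk}` and `a^i_{kj} = -a^j_{ki}`. -/

section

variable {K : Type*} [Field K] {d : ℕ}

theorem hypForm_comm (p q : (Fin d → K) × (Fin d → K)) : hypForm p q = hypForm q p :=
  Finset.sum_congr rfl fun i _ => by ring

theorem hypForm_zero_single (p : (Fin d → K) × (Fin d → K)) (j : Fin d) :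
    hypForm p (0, Pi.single j 1) = p.1 j := by
  simp [hypForm, Pi.single_apply]

theorem hypForm_single_zero (p : (Fin d → K) × (Fin d → K)) (j : Fin d) :
    hypForm p (Pi.single j 1, 0) = p.2 j := by
  simp [hypForm, Pi.single_apply]

theorem eq_zero_of_hypForm_eq_zero {p : (Fin d → K) × (Fin d → K)}
    (hp : ∀ q, hypForm p q = 0) : p = 0 := by
  ext j
  · simpa [hypForm_zero_single] using hp (0, Pi.single j 1)
  · simpa [hypForm_single_zero] using hp (Pi.single j 1, 0)

theorem hypForm_nBracket_left (A : Fin d → Matrix (Fin d) (Fin d) K)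
    (p q r : (Fin d → K) × (Fin d → K)) :
    hypForm (nBracket A p q) r = ∑ i, ∑ j, ∑ k, p.1 i * q.1 j * r.1 k * A i k j := by
  simp only [hypForm, nBracket, Pi.zero_apply, zero_mul, zero_add, Finset.sum_mul]
  rw [Finset.sum_comm]
  refine Finset.sum_congr rfl fun i _ => ?_
  rw [Finset.sum_comm]
  exact Finset.sum_congr rfl fun j _ => Finset.sum_congr rfl fun k _ => by ring

theorem hypForm_nBracket_right (A : Fin d → Matrix (Fin d) (Fin d) K)
    (p q r : (Fin d → K) × (Fin d → K)) :
    hypForm p (nBracket A q r) = ∑ i, ∑ j, ∑ k, p.1 i * q.1 j * r.1 k * A j i k := by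
  simp only [hypForm, nBracket, Pi.zero_apply, mul_zero, add_zero, Finset.mul_sum]
  exact Finset.sum_congr rfl fun i _ => Finset.sum_congr rfl fun j _ =>
    Finset.sum_congr rfl fun k _ => by ring

theorem hypForm_nBracket_assoc {A : Fin d → Matrix (Fin d) (Fin d) K}
    (hA : ∀ i j k, A i k j = A j i k) (p q r : (Fin d → K) × (Fin d → K)) :
    hypForm (nBracket A p q) r = hypForm p (nBracket A q r) := by
  rw [hypForm_nBracket_left, hypForm_nBracket_right]
  exact Finset.sum_congr rfl fun i _ => Finset.sum_congr rfl fun j _ =>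
    Finset.sum_congr rfl fun k _ => by rw [hA]

namespace IsQuadraticFamily

variable {A : Fin d → Matrix (Fin d) (Fin d) K}

theorem apply_swap_right (hA : IsQuadraticFamily A) (i k j : Fin d) :
    A i k j = -A i j k := by
  simpa using congrFun (congrFun (hA.1 i) j) k

theorem apply_swap_outer (hA : IsQuadraticFamily A) (i k j : Fin d) :
    A i k j = -A j k i := by
  rcases lt_trichotomy i j with h | rfl | h
  · exact hA.2.2.1 i j h k
  · simp [hA.2.1]
  · rw [hA.2.2.1 j i h k, neg_neg]

theorem apply_cycle (hA : IsQuadraticFamily A) (i j k : Fin d) : A i k j = A j i k := by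
  rw [hA.apply_swap_right, hA.apply_swap_outer i j k, neg_neg, hA.apply_swap_right,
    hA.apply_swap_outer, neg_neg]

end IsQuadraticFamily

end

theorem stmt_12_general {K : Type*} [Field K] {d : ℕ}
    (A : Fin d → Matrix (Fin d) (Fin d) K) (hA : IsQuadraticFamily A) :
    -- symmetric
    (∀ p q : (Fin d → K) × (Fin d → K), hypForm p q = hypForm q p) ∧
    -- nondegenerate
    (∀ p : (Fin d → K) × (Fin d → K), (∀ q, hypForm p q = 0) → p = 0) ∧
    -- invariant
    (∀ p q r, hypForm (nBracket A p q) r = hypForm p (nBracket A q r)) :=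
  ⟨hypForm_comm, fun _ => eq_zero_of_hypForm_eq_zero, hypForm_nBracket_assoc hA.apply_cycle⟩

/-- for a `d`-quadratic family, the hyperbolic bilinear form
`φ(vᵢ,z_j) = δ_{ij}`, `φ(vᵢ,v_j) = φ(zᵢ,z_j) = 0` is symmetric, nondegenerate and
invariant on `n(A₁,…,A_d)`; hence the latter is a quadratic 2-step nilpotent Lie
algebra. -/
theorem stmt_12 {K : Type*} [Field K] [CharZero K] {d : ℕ}
    (A : Fin d → Matrix (Fin d) (Fin d) K) (hA : IsQuadraticFamily A) :
    -- symmetric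
    (∀ p q : (Fin d → K) × (Fin d → K), hypForm p q = hypForm q p) ∧
    -- nondegenerate
    (∀ p : (Fin d → K) × (Fin d → K), (∀ q, hypForm p q = 0) → p = 0) ∧
    -- invariant
    (∀ p q r, hypForm (nBracket A p q) r = hypForm p (nBracket A q r)) :=
  stmt_12_general A hA
end

section
/- Let {A₁,…,A_d} be a d-quadratic family and n = n(A₁,…,A_d) the associated Lie algebra. Then the center of n equals span{z₁,…,z_d} = [n,n]; i.e., n is reduced. In particular, if u = x₁v₁ + … + x_d v_d is central, then Aᵢ·(x₁,…,x_d)ᵗ = 0 for all i, which by the rank-d condition on B(A₁,…,A_d) forces u = 0. -/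
/-!
The bracket is `[p, q] = (0, Σᵢⱼ p₁ᵢ q₁ⱼ Aᵢ e_j)`. The column conditions make `a^i_{kj}`
alternating in `(i, j)`, so `[p, e_j] = -(0, A_j p₁)` and `p` is central iff `A_j p₁ = 0` for all
`j`. Skewness of `Aᵢ` turns `A_i x = 0` into `x ⬝ B_{(i,j)} = 0` for every column of
`B = B(A₁,…,A_d)`; as `B` has rank `d` its rows are independent, so `x = 0`. The same rank
condition says the columns `[e_i, e_j] = (0, B_{(i,j)})` span `0 × K^d`.
-/

open Matrix

namespace Matrix

variable {K m n : Type*} [Field K] [Fintype m] [Fintype n]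

theorem linearIndependent_row_of_rank_eq_card {M : Matrix m n K} (h : M.rank = Fintype.card m) :
    LinearIndependent K M.row := by
  rw [linearIndependent_iff_card_eq_finrank_span, Set.finrank, ← rank_eq_finrank_span_row, h]

theorem span_range_col_eq_top_of_rank_eq_card {M : Matrix m n K} (h : M.rank = Fintype.card m) :
    Submodule.span K (Set.range M.col) = ⊤ :=
  Submodule.eq_top_of_finrank_eq <| by
    rw [← rank_eq_finrank_span_cols, h, Module.finrank_fintype_fun_eq_card]

end Matrix

/-- The matrix `B(A₁,…,A_d)`, whose column indexed by `i < j` is the `j`-th column of `Aᵢ`. -/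
def quadraticFamilyMatrix {K : Type*} [Field K] {d : ℕ} (A : Fin d → Matrix (Fin d) (Fin d) K) :
    Matrix (Fin d) {p : Fin d × Fin d // p.1 < p.2} K :=
  of fun k p => A p.val.1 k p.val.2

section

variable {K : Type*} [Field K] {d : ℕ} (A : Fin d → Matrix (Fin d) (Fin d) K)

theorem nBracket_fst (p q : (Fin d → K) × (Fin d → K)) : (nBracket A p q).1 = 0 := rfl

theorem nBracket_single_single (i j : Fin d) :
    nBracket A (Pi.single i 1, 0) (Pi.single j 1, 0) = (0, fun k => A i k j) := by
  ext k <;> simp [nBracket, Pi.single_apply]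

end

namespace IsQuadraticFamily

variable {K : Type*} [Field K] {d : ℕ} {A : Fin d → Matrix (Fin d) (Fin d) K}

theorem rank_eq_card (hA : IsQuadraticFamily A) :
    (quadraticFamilyMatrix A).rank = Fintype.card (Fin d) :=
  hA.2.2.2.trans (Fintype.card_fin d).symm

theorem apply_skew (hA : IsQuadraticFamily A) (i j k : Fin d) : A i k j = -A i j k := by
  simpa using congrFun (congrFun (hA.1 i) j) k

theorem apply_alternating (hA : IsQuadraticFamily A) (i j k : Fin d) : A i k j = -A j k i := by
  obtain ⟨-, hdiag, hlt, -⟩ := hA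
  rcases lt_trichotomy i j with h | rfl | h
  · exact hlt i j h k
  · simp [hdiag]
  · rw [hlt j i h k, neg_neg]

theorem nBracket_snd_eq (hA : IsQuadraticFamily A) (p q : (Fin d → K) × (Fin d → K)) :
    (nBracket A p q).2 = -∑ j, q.1 j • A j *ᵥ p.1 := by
  ext k
  simp only [nBracket, Pi.neg_apply, Finset.sum_apply, Pi.smul_apply, smul_eq_mul, mulVec,
    dotProduct, Finset.mul_sum, ← Finset.sum_neg_distrib]
  rw [Finset.sum_comm]
  exact Finset.sum_congr rfl fun j _ => Finset.sum_congr rfl fun i _ => by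
    rw [hA.apply_alternating i j k]; ring

theorem eq_zero_of_forall_mulVec_eq_zero (hA : IsQuadraticFamily A) {x : Fin d → K}
    (hx : ∀ i, A i *ᵥ x = 0) : x = 0 := by
  have hxB : x ᵥ* quadraticFamilyMatrix A = 0 := by
    ext ⟨⟨i, j⟩, hij⟩
    calc ∑ k, x k * A i k j = -∑ k, A i j k * x k := by
          rw [← Finset.sum_neg_distrib]
          exact Finset.sum_congr rfl fun k _ => by rw [hA.apply_skew]; ring
      _ = 0 := by simpa [mulVec, dotProduct] using congrFun (hx i) j
  exact vecMul_injective_iff.2 (linearIndependent_row_of_rank_eq_card hA.rank_eq_card)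
    (hxB.trans (zero_vecMul _).symm)

theorem forall_nBracket_eq_zero_iff (hA : IsQuadraticFamily A) (p : (Fin d → K) × (Fin d → K)) :
    (∀ q, nBracket A p q = 0) ↔ p.1 = 0 := by
  refine ⟨fun h => hA.eq_zero_of_forall_mulVec_eq_zero fun j => ?_, fun h q => ?_⟩
  · simpa [hA.nBracket_snd_eq, Pi.single_apply] using congrArg Prod.snd (h (Pi.single j 1, 0))
  · ext k <;> simp [nBracket, h]

theorem span_nBracket_eq_prod_bot_top (hA : IsQuadraticFamily A) :
    Submodule.span K {x | ∃ p q, nBracket A p q = x} = Submodule.prod ⊥ ⊤ := by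
  refine le_antisymm (Submodule.span_le.2 ?_) ?_
  · rintro _ ⟨p, q, rfl⟩
    exact ⟨nBracket_fst A p q, trivial⟩
  · rintro ⟨a, z⟩ ⟨rfl : a = 0, -⟩
    have hcols : Submodule.span K (Set.range (quadraticFamilyMatrix A).col) ≤
        (Submodule.span K {x | ∃ p q, nBracket A p q = x}).comap (LinearMap.inr K _ _) :=
      Submodule.span_le.2 <| by
        rintro _ ⟨⟨⟨i, j⟩, -⟩, rfl⟩
        exact Submodule.subset_span ⟨_, _, nBracket_single_single A i j⟩
    exact hcols (span_range_col_eq_top_of_rank_eq_card hA.rank_eq_card ▸ Submodule.mem_top)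

end IsQuadraticFamily

theorem stmt_13_general {K : Type*} [Field K] {d : ℕ}
    (A : Fin d → Matrix (Fin d) (Fin d) K) (hA : IsQuadraticFamily A) :
    -- the center is span{z₁,…,z_d} …
    {p | ∀ q, nBracket A p q = 0}
      = (Submodule.prod (⊥ : Submodule K (Fin d → K))
          (⊤ : Submodule K (Fin d → K)) : Set _) ∧
    -- … which equals the derived subalgebra: n is reduced
    Submodule.span K {x | ∃ p q, nBracket A p q = x}
      = Submodule.prod (⊥ : Submodule K (Fin d → K)) (⊤ : Submodule K (Fin d → K)) ∧
    -- in particular: a vector annihilated by all Aᵢ is zero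
    (∀ x : Fin d → K, (∀ i, (A i).mulVec x = 0) → x = 0) := by
  refine ⟨Set.ext fun p => (hA.forall_nBracket_eq_zero_iff p).trans ?_, hA.span_nBracket_eq_prod_bot_top,
    fun x => hA.eq_zero_of_forall_mulVec_eq_zero⟩
  simp

/-- for a `d`-quadratic family, the center of `n(A₁,…,A_d)` equals
`span{z₁,…,z_d} = [n,n]`, i.e. `n` is reduced; in particular a central element
`u = Σ xᵢvᵢ` satisfies `Aᵢ·x = 0` for all `i`, which by the rank condition forces
`u = 0`. -/
theorem stmt_13 {K : Type*} [Field K] [CharZero K] {d : ℕ}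
    (A : Fin d → Matrix (Fin d) (Fin d) K) (hA : IsQuadraticFamily A) :
    -- the center is span{z₁,…,z_d} …
    {p | ∀ q, nBracket A p q = 0}
      = (Submodule.prod (⊥ : Submodule K (Fin d → K))
          (⊤ : Submodule K (Fin d → K)) : Set _) ∧
    -- … which equals the derived subalgebra: n is reduced
    Submodule.span K {x | ∃ p q, nBracket A p q = x}
      = Submodule.prod (⊥ : Submodule K (Fin d → K)) (⊤ : Submodule K (Fin d → K)) ∧
    -- in particular: a vector annihilated by all Aᵢ is zero
    (∀ x : Fin d → K, (∀ i, (A i).mulVec x = 0) → x = 0) :=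
  stmt_13_general A hA
end

section
/- Let {A₁,…,A_d} and {E₁,…,E_d} be two d-quadratic families and (n_A, φ₀), (n_E, ψ₀) the associated quadratic Lie algebras with hyperbolic metric. Then (n_A, φ₀) and (n_E, ψ₀) are isometrically isomorphic if and only if there exists an invertible d×d matrix Q such that B(E₁,…,E_d) = Qᵗ B(A₁,…,A_d) Q̂, where Q̂ is the d(d−1)/2 × d(d−1)/2 matrix induced by Q on Λ²K^d (second compound matrix). -/
open Matrix

/-- The matrix `B(A₁,…,A_d)` of a family, whose columns (indexed by pairs `i < j`) are the
`j`-th columns of `Aᵢ`. -/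
def Bmat {K : Type*} [Field K] {d : ℕ} (A : Fin d → Matrix (Fin d) (Fin d) K) :
    Matrix (Fin d) {p : Fin d × Fin d // p.1 < p.2} K :=
  Matrix.of fun k p => A p.val.1 k p.val.2


section Stmt16Aux

variable {K : Type*} [Field K] {d : ℕ}

abbrev Pairs (d : ℕ) := {p : Fin d × Fin d // p.1 < p.2}

def hat (Q : Matrix (Fin d) (Fin d) K) : Matrix (Pairs d) (Pairs d) K :=
  Matrix.of fun r c => Q r.val.1 c.val.1 * Q r.val.2 c.val.2
    - Q r.val.1 c.val.2 * Q r.val.2 c.val.1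

def wedge (x y : Fin d → K) : Pairs d → K :=
  fun p => x p.val.1 * y p.val.2 - x p.val.2 * y p.val.1

lemma sum_pairs (G : Fin d → Fin d → K) (hdiag : ∀ i, G i i = 0) :
    ∑ i, ∑ j, G i j = ∑ p : Pairs d, (G p.val.1 p.val.2 + G p.val.2 p.val.1) := by
  classical
  have h0 : ∑ p : Fin d × Fin d, G p.1 p.2 = ∑ i, ∑ j, G i j :=
    Fintype.sum_prod_type (f := fun p => G p.1 p.2)
  rw [← h0]
  rw [← Finset.sum_filter_add_sum_filter_not Finset.univ (fun p : Fin d × Fin d => p.1 < p.2)]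
  have h1 : ∑ p ∈ Finset.univ.filter (fun p : Fin d × Fin d => ¬ p.1 < p.2), G p.1 p.2
      = ∑ p ∈ Finset.univ.filter (fun p : Fin d × Fin d => p.2 < p.1), G p.1 p.2 := by
    refine (Finset.sum_subset ?_ ?_).symm
    · intro p hp
      simp only [Finset.mem_filter, Finset.mem_univ, true_and] at hp ⊢
      exact not_lt.2 hp.le
    · intro p hp hnp
      simp only [Finset.mem_filter, Finset.mem_univ, true_and, not_lt] at hp hnp
      have : p.1 = p.2 := le_antisymm hnp hp
      rw [show G p.1 p.2 = G p.1 p.1 from by rw [this]] at *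
      exact hdiag p.1
  rw [h1]
  have h2 : ∑ p ∈ Finset.univ.filter (fun p : Fin d × Fin d => p.2 < p.1), G p.1 p.2
      = ∑ p ∈ Finset.univ.filter (fun p : Fin d × Fin d => p.1 < p.2), G p.2 p.1 := by
    refine Finset.sum_equiv (Equiv.prodComm (Fin d) (Fin d)) ?_ ?_
    · intro p; simp
    · intro p hp; rfl
  rw [h2, ← Finset.sum_add_distrib]
  exact Finset.sum_subtype _ (by simp) _

lemma wedge_mulVec (Q : Matrix (Fin d) (Fin d) K) (x y : Fin d → K) :
    wedge (Q *ᵥ x) (Q *ᵥ y) = hat Q *ᵥ wedge x y := by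
  funext p
  obtain ⟨⟨r, s⟩, hrs⟩ := p
  have expand : wedge (Q *ᵥ x) (Q *ᵥ y) ⟨(r, s), hrs⟩
      = ∑ i, ∑ j, (Q r i * x i * (Q s j * y j) - Q s i * x i * (Q r j * y j)) := by
    simp only [wedge, Matrix.mulVec, dotProduct, Finset.sum_mul_sum]
    rw [← Finset.sum_sub_distrib]
    refine Finset.sum_congr rfl fun i _ => ?_
    rw [← Finset.sum_sub_distrib]
  rw [expand, sum_pairs _ (fun i => by ring)]
  simp only [Matrix.mulVec, dotProduct, hat, wedge, Matrix.of_apply]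
  refine Finset.sum_congr rfl fun c _ => ?_
  ring

lemma hat_mul (Q P : Matrix (Fin d) (Fin d) K) : hat (Q * P) = hat Q * hat P := by
  ext r c
  obtain ⟨⟨r1, r2⟩, hr⟩ := r
  obtain ⟨⟨c1, c2⟩, hc⟩ := c
  have h := congrFun (wedge_mulVec Q (fun k => P k c1) (fun k => P k c2)) ⟨(r1, r2), hr⟩
  have h1 : Q *ᵥ (fun k => P k c1) = fun k => (Q * P) k c1 := by
    funext k; simp [Matrix.mulVec, dotProduct, Matrix.mul_apply]
  have h2 : Q *ᵥ (fun k => P k c2) = fun k => (Q * P) k c2 := by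
    funext k; simp [Matrix.mulVec, dotProduct, Matrix.mul_apply]
  rw [h1, h2] at h
  calc hat (Q * P) ⟨(r1, r2), hr⟩ ⟨(c1, c2), hc⟩
      = wedge (fun k => (Q * P) k c1) (fun k => (Q * P) k c2) ⟨(r1, r2), hr⟩ := by
        simp only [hat, wedge, Matrix.of_apply]; ring
    _ = (hat Q *ᵥ wedge (fun k => P k c1) (fun k => P k c2)) ⟨(r1, r2), hr⟩ := h
    _ = (hat Q * hat P) ⟨(r1, r2), hr⟩ ⟨(c1, c2), hc⟩ := by
        simp only [Matrix.mulVec, dotProduct, Matrix.mul_apply, hat, wedge,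
          Matrix.of_apply]
        refine Finset.sum_congr rfl fun c _ => ?_
        ring

lemma hat_one : hat (1 : Matrix (Fin d) (Fin d) K) = 1 := by
  ext r c
  obtain ⟨⟨r1, r2⟩, hr⟩ := r
  obtain ⟨⟨c1, c2⟩, hc⟩ := c
  have hr' : (r1 : ℕ) < (r2 : ℕ) := hr
  have hc' : (c1 : ℕ) < (c2 : ℕ) := hc
  simp only [hat, Matrix.of_apply, Matrix.one_apply, Subtype.mk.injEq, Prod.mk.injEq]
  split_ifs <;> simp_all [Fin.ext_iff] <;> omega

lemma rows_indep {n : Type*} [Fintype n] (M : Matrix (Fin d) n K) (h : M.rank = d)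
    (c : Fin d → K) (hc : c ᵥ* M = 0) : c = 0 := by
  have h1 : Mᵀ.rank = d := by rw [Matrix.rank_transpose]; exact h
  rw [Matrix.rank] at h1
  have hd : Module.finrank K (Fin d → K) = d := by simp
  have h3 := LinearMap.finrank_range_add_finrank_ker Mᵀ.mulVecLin
  rw [h1, hd] at h3
  have h4 : Module.finrank K (LinearMap.ker Mᵀ.mulVecLin) = 0 := by omega
  have h5 : LinearMap.ker Mᵀ.mulVecLin = ⊥ := Submodule.finrank_eq_zero.mp h4
  have h6 : c ∈ LinearMap.ker Mᵀ.mulVecLin := by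
    simp only [LinearMap.mem_ker, Matrix.mulVecLin_apply, Matrix.mulVec_transpose]
    exact hc
  rw [h5] at h6
  exact h6

lemma nBracket_eq (A : Fin d → Matrix (Fin d) (Fin d) K)
    (hA2 : ∀ i k, A i k i = 0)
    (hA3 : ∀ i j : Fin d, i < j → ∀ k, A i k j = -(A j k i))
    (p q : (Fin d → K) × (Fin d → K)) :
    nBracket A p q = (0, Bmat A *ᵥ wedge p.1 q.1) := by
  unfold nBracket
  refine Prod.ext rfl ?_
  funext k
  have := sum_pairs (fun i j => p.1 i * q.1 j * A i k j)
    (fun i => by beta_reduce; rw [hA2 i k]; ring)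
  simp only [] at this ⊢
  rw [this]
  simp only [Matrix.mulVec, dotProduct, Bmat, wedge, Matrix.of_apply]
  refine Finset.sum_congr rfl fun pr _ => ?_
  obtain ⟨⟨i, j⟩, hij⟩ := pr
  have := hA3 i j hij k
  simp only []
  rw [this]
  ring

lemma wedge_single {i j : Fin d} (hij : i < j) :
    wedge (Pi.single i (1:K)) (Pi.single j 1) = Pi.single ⟨(i, j), hij⟩ 1 := by
  classical
  funext pr
  obtain ⟨⟨r, s⟩, hrs⟩ := pr
  have hr' : (r : ℕ) < (s : ℕ) := hrs
  have hij' : (i : ℕ) < (j : ℕ) := hij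
  simp only [wedge, Pi.single_apply, Subtype.mk.injEq, Prod.mk.injEq]
  split_ifs <;> simp_all [Fin.ext_iff] <;> omega

lemma mulVec_dot_mulVec {n : ℕ} (M N : Matrix (Fin n) (Fin n) K) (h : Mᵀ * N = 1)
    (x w : Fin n → K) : (M *ᵥ x) ⬝ᵥ (N *ᵥ w) = x ⬝ᵥ w := by
  rw [dotProduct_mulVec, ← Matrix.vecMul_transpose, Matrix.vecMul_vecMul, h,
    Matrix.vecMul_one]

end Stmt16Aux

/-- two `d`-quadratic families `{A₁,…,A_d}` and `{E₁,…,E_d}` give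
isometrically isomorphic quadratic Lie algebras `(n_A, φ₀)`, `(n_E, ψ₀)` if and only if
there is an invertible `d×d` matrix `Q` with `B(E₁,…,E_d) = Qᵀ B(A₁,…,A_d) Q̂`, where `Q̂`
is the second compound matrix of `Q`. -/
theorem stmt_16 {K : Type*} [Field K] [CharZero K] {d : ℕ}
    (A E : Fin d → Matrix (Fin d) (Fin d) K)
    (hA : IsQuadraticFamily A) (hE : IsQuadraticFamily E) :
    (∃ f : ((Fin d → K) × (Fin d → K)) ≃ₗ[K] ((Fin d → K) × (Fin d → K)),
        (∀ p q, f (nBracket A p q) = nBracket E (f p) (f q)) ∧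
        (∀ p q, hypForm p q = hypForm (f p) (f q)))
      ↔ ∃ Q : Matrix (Fin d) (Fin d) K, IsUnit Q ∧
          Bmat E = Qᵀ * Bmat A
            * (Matrix.of fun (r c : {p : Fin d × Fin d // p.1 < p.2}) =>
                Q r.val.1 c.val.1 * Q r.val.2 c.val.2
                  - Q r.val.1 c.val.2 * Q r.val.2 c.val.1) := by
  classical
  constructor
  · rintro ⟨f, hLie, hIso⟩
    -- the first component of the image of a central element vanishes
    have hcenter : ∀ z : Fin d → K, (f (0, z)).1 = 0 := by
      intro z
      set x : Fin d → K := (f (0, z)).1 with hx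
      have hb : ∀ w : (Fin d → K) × (Fin d → K), nBracket E (f (0, z)) w = 0 := by
        intro w
        have h1 : nBracket A (0, z) (f.symm w) = 0 := by
          refine Prod.ext rfl ?_
          funext k
          simp [nBracket]
        have h2 := hLie (0, z) (f.symm w)
        rw [h1, map_zero, f.apply_symm_apply] at h2
        exact h2.symm
      have hX : ∀ k j : Fin d, ∑ i, x i * E i k j = 0 := by
        intro k j
        have h3 := congrArg (fun t => t.2 k) (hb (Pi.single j 1, 0))
        simp only [nBracket, Prod.snd_zero, Pi.zero_apply] at h3
        rw [← h3]
        refine (Finset.sum_congr rfl fun i _ => ?_).symm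
        rw [Finset.sum_eq_single j]
        · simp [hx]
        · intro b _ hb'; simp [Pi.single_apply, hb']
        · intro hj; exact absurd (Finset.mem_univ j) hj
      -- total antisymmetry
      have hskew : ∀ i k j : Fin d, E i j k = -(E i k j) := by
        intro i k j
        have := congrFun (congrFun (hE.1 i) k) j
        simpa [Matrix.transpose_apply] using this
      have hswap : ∀ i j k : Fin d, E i k j = -(E j k i) := by
        intro i j k
        rcases lt_trichotomy i j with h | h | h
        · exact hE.2.2.1 i j h k
        · subst h; rw [hE.2.1 i k]; ring
        · have := hE.2.2.1 j i h k
          rw [this]; ring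
      have hcyc : ∀ i k j : Fin d, E i k j = E k j i := by
        intro i k j
        rw [hswap i j k, show E j k i = -(E j i k) from hskew j i k,
          show E j i k = -(E k i j) from hswap j k i,
          show E k i j = -(E k j i) from hskew k j i]
        ring
      have hvec : x ᵥ* Bmat E = 0 := by
        funext pr
        have h4 : ∑ k, x k * E pr.val.1 k pr.val.2 = 0 := by
          calc ∑ k, x k * E pr.val.1 k pr.val.2
              = ∑ k, x k * E k pr.val.2 pr.val.1 := by
                refine Finset.sum_congr rfl fun k _ => ?_
                rw [hcyc pr.val.1 k pr.val.2]
            _ = 0 := hX pr.val.2 pr.val.1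
        simpa [Matrix.vecMul, dotProduct, Bmat] using h4
      exact rows_indep (Bmat E) hE.2.2.2 x hvec
    -- the block matrices of f
    set P : Matrix (Fin d) (Fin d) K :=
      Matrix.of fun k i => (f (Pi.single i 1, 0)).1 k with hP
    set S : Matrix (Fin d) (Fin d) K :=
      Matrix.of fun k i => (f (Pi.single i 1, 0)).2 k with hS
    set R : Matrix (Fin d) (Fin d) K :=
      Matrix.of fun k i => (f (0, Pi.single i 1)).2 k with hR
    have hfz : ∀ z : Fin d → K, f (0, z) = (0, R *ᵥ z) := by
      have heq : (f.toLinearMap.comp (LinearMap.inr K (Fin d → K) (Fin d → K)))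
          = LinearMap.prod (0 : (Fin d → K) →ₗ[K] (Fin d → K)) R.mulVecLin := by
        refine Module.Basis.ext (Pi.basisFun K (Fin d)) fun i => ?_
        simp only [Pi.basisFun_apply, LinearMap.comp_apply, LinearMap.inr_apply,
          LinearMap.prod_apply, LinearMap.zero_apply, Function.prod_apply, LinearEquiv.coe_coe,
          Matrix.mulVecLin_apply, Matrix.mulVec_single_one, Matrix.col_apply, mul_one]
        refine Prod.ext (hcenter (Pi.single i 1)) rfl
      intro z
      have := LinearMap.congr_fun heq z
      simpa [Pi.prod] using this
    have hfv : ∀ x : Fin d → K, f (x, 0) = (P *ᵥ x, S *ᵥ x) := by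
      have heq : (f.toLinearMap.comp (LinearMap.inl K (Fin d → K) (Fin d → K)))
          = LinearMap.prod P.mulVecLin S.mulVecLin := by
        refine Module.Basis.ext (Pi.basisFun K (Fin d)) fun i => ?_
        simp only [Pi.basisFun_apply, LinearMap.comp_apply, LinearMap.inl_apply,
          LinearMap.prod_apply, Function.prod_apply, LinearEquiv.coe_coe,
          Matrix.mulVecLin_apply, Matrix.mulVec_single_one, Matrix.col_apply, mul_one]
        exact Prod.ext rfl rfl
      intro x
      have := LinearMap.congr_fun heq x
      simpa [Pi.prod] using this
    have hfv1 : ∀ x : Fin d → K, (f (x, 0)).1 = P *ᵥ x := fun x =>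
      congrArg Prod.fst (hfv x)
    -- isometry on basis vectors gives Pᵀ R = 1
    have hPR : Pᵀ * R = 1 := by
      ext i j
      have h5 := hIso (Pi.single i 1, 0) (0, Pi.single j 1)
      rw [hfv, hfz] at h5
      have lhs : hypForm ((Pi.single i 1 : Fin d → K), (0 : Fin d → K))
          ((0 : Fin d → K), (Pi.single j 1 : Fin d → K)) = if i = j then 1 else 0 := by
        simp only [hypForm, Pi.zero_apply, mul_zero, zero_mul, add_zero, Pi.single_apply]
        simp [Finset.sum_ite_eq', eq_comm]
      have rhs : hypForm (P *ᵥ Pi.single i 1, S *ᵥ Pi.single i 1)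
          ((0 : Fin d → K), R *ᵥ Pi.single j 1) = ∑ k, Pᵀ i k * R k j := by
        simp only [hypForm, Pi.zero_apply, mul_zero, add_zero, Matrix.mulVec_single_one,
          Matrix.col_apply, mul_one, Matrix.transpose_apply]
      rw [lhs, rhs] at h5
      rw [Matrix.mul_apply, Matrix.one_apply, ← h5]
    -- the bracket condition on basis vectors gives R B_A = B_E (hat P)
    have hRB : R * Bmat A = Bmat E * hat P := by
      ext k pr
      obtain ⟨⟨i, j⟩, hij⟩ := pr
      have h6 := hLie (Pi.single i 1, 0) (Pi.single j 1, 0)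
      rw [nBracket_eq A hA.2.1 hA.2.2.1, nBracket_eq E hE.2.1 hE.2.2.1] at h6
      simp only [hfv1] at h6
      rw [hfz, wedge_mulVec] at h6
      have hw : wedge (Pi.single i (1:K)) (Pi.single j 1)
          = Pi.single (⟨(i, j), hij⟩ : Pairs d) 1 := wedge_single hij
      rw [hw] at h6
      have h7 := congrFun (congrArg Prod.snd h6) k
      rw [Matrix.mulVec_mulVec, Matrix.mulVec_mulVec] at h7
      have h8 : ((R * Bmat A) *ᵥ Pi.single (⟨(i, j), hij⟩ : Pairs d) 1) k
          = ((Bmat E * hat P) *ᵥ Pi.single (⟨(i, j), hij⟩ : Pairs d) 1) k := h7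
      rw [Matrix.mulVec_single, Matrix.mulVec_single] at h8
      simpa [mul_one] using h8
    have hRP : Rᵀ * P = 1 := by
      have h9 := congrArg Matrix.transpose hPR
      rwa [Matrix.transpose_mul, Matrix.transpose_transpose, Matrix.transpose_one] at h9
    have hPRt : P * Rᵀ = 1 := mul_eq_one_comm.mp hRP
    refine ⟨Rᵀ, ⟨⟨Rᵀ, P, hRP, hPRt⟩, rfl⟩, ?_⟩
    show Bmat E = (Rᵀ)ᵀ * Bmat A * hat Rᵀ
    rw [Matrix.transpose_transpose]
    calc Bmat E = Bmat E * (hat P * hat Rᵀ) := by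
          rw [← hat_mul, hPRt, hat_one, Matrix.mul_one]
      _ = (Bmat E * hat P) * hat Rᵀ := by rw [Matrix.mul_assoc]
      _ = R * Bmat A * hat Rᵀ := by rw [← hRB]
  · rintro ⟨Q, hQ, hBE⟩
    have hBE' : Bmat E = Qᵀ * Bmat A * hat Q := hBE
    have hdet : IsUnit Q.det := (Matrix.isUnit_iff_isUnit_det Q).mp hQ
    have hQi : Q⁻¹ * Q = 1 := Matrix.nonsing_inv_mul Q hdet
    have hQi' : Q * Q⁻¹ = 1 := Matrix.mul_nonsing_inv Q hdet
    have hdetT : IsUnit Qᵀ.det := by rwa [Matrix.det_transpose]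
    have hQiT : (Qᵀ)⁻¹ * Qᵀ = 1 := Matrix.nonsing_inv_mul Qᵀ hdetT
    have hQiT' : Qᵀ * (Qᵀ)⁻¹ = 1 := Matrix.mul_nonsing_inv Qᵀ hdetT
    refine ⟨LinearEquiv.ofLinear
      (LinearMap.prodMap (Q⁻¹).mulVecLin (Qᵀ).mulVecLin)
      (LinearMap.prodMap Q.mulVecLin ((Qᵀ)⁻¹).mulVecLin) ?_ ?_, ?_, ?_⟩
    · apply LinearMap.ext
      rintro ⟨x, z⟩
      refine Prod.ext ?_ ?_
      · show Q⁻¹ *ᵥ (Q *ᵥ x) = x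
        rw [Matrix.mulVec_mulVec, hQi, Matrix.one_mulVec]
      · show Qᵀ *ᵥ ((Qᵀ)⁻¹ *ᵥ z) = z
        rw [Matrix.mulVec_mulVec, hQiT', Matrix.one_mulVec]
    · apply LinearMap.ext
      rintro ⟨x, z⟩
      refine Prod.ext ?_ ?_
      · show Q *ᵥ (Q⁻¹ *ᵥ x) = x
        rw [Matrix.mulVec_mulVec, hQi', Matrix.one_mulVec]
      · show (Qᵀ)⁻¹ *ᵥ (Qᵀ *ᵥ z) = z
        rw [Matrix.mulVec_mulVec, hQiT, Matrix.one_mulVec]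
    · intro p q
      simp only [LinearEquiv.ofLinear_apply, LinearMap.prodMap_apply, Matrix.mulVecLin_apply]
      rw [nBracket_eq A hA.2.1 hA.2.2.1, nBracket_eq E hE.2.1 hE.2.2.1]
      simp only [LinearMap.prodMap_apply, Matrix.mulVecLin_apply]
      refine Prod.ext ?_ ?_
      · simp
      · show Qᵀ *ᵥ (Bmat A *ᵥ wedge p.1 q.1) = Bmat E *ᵥ wedge (Q⁻¹ *ᵥ p.1) (Q⁻¹ *ᵥ q.1)
        rw [wedge_mulVec, Matrix.mulVec_mulVec, Matrix.mulVec_mulVec, hBE']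
        rw [Matrix.mul_assoc, Matrix.mul_assoc, ← hat_mul, hQi', hat_one, Matrix.mul_one]
    · intro p q
      simp only [LinearEquiv.ofLinear_apply, LinearMap.prodMap_apply, Matrix.mulVecLin_apply]
      have e1 : (Q⁻¹ *ᵥ p.1) ⬝ᵥ (Qᵀ *ᵥ q.2) = p.1 ⬝ᵥ q.2 := by
        refine mulVec_dot_mulVec _ _ ?_ _ _
        rw [← Matrix.transpose_mul, hQi', Matrix.transpose_one]
      have e2 : (Qᵀ *ᵥ p.2) ⬝ᵥ (Q⁻¹ *ᵥ q.1) = p.2 ⬝ᵥ q.1 := by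
        refine mulVec_dot_mulVec _ _ ?_ _ _
        rw [Matrix.transpose_transpose, hQi']
      show hypForm p q = hypForm (Q⁻¹ *ᵥ p.1, Qᵀ *ᵥ p.2) (Q⁻¹ *ᵥ q.1, Qᵀ *ᵥ q.2)
      simp only [hypForm]
      rw [Finset.sum_add_distrib, Finset.sum_add_distrib]
      congr 1
      · exact e1.symm
      · exact e2.symm
end

section
/- Let (g, φ) be a quadratic Lie algebra over char 0 that is non-reduced (Z(g) ⊄ [g,g]) and non-abelian. Then g decomposes as an orthogonal direct sum of ideals g = g₁ ⊕ a, where (g₁, φ|_{g₁}) is a quadratic reduced Lie algebra and (a, φ|_a) is a quadratic abelian Lie algebra (a ⊆ Z(g)), and the two summands are φ-orthogonal. -/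
/-- Tsou–Walker: a non-reduced non-abelian quadratic Lie algebra `(g, φ)`
over char 0 decomposes as a `φ`-orthogonal direct sum of ideals `g = g₁ ⊕ a` where
`(g₁, φ|)` is quadratic and reduced and `(a, φ|)` is quadratic and abelian, `a ⊆ Z(g)`. -/
theorem stmt_17 {K : Type*} [Field K] [CharZero K]
    {g : Type*} [LieRing g] [LieAlgebra K g] [Module.Finite K g]
    (φ : LinearMap.BilinForm K g)
    (hsymm : φ.IsSymm) (hnd : φ.Nondegenerate)
    (hinv : ∀ x y z : g, φ ⁅x, y⁆ z = φ x ⁅y, z⁆)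
    (hnonred : ¬ LieAlgebra.center K g ≤ ⁅(⊤ : LieIdeal K g), (⊤ : LieIdeal K g)⁆)
    (hnonab : ∃ x y : g, ⁅x, y⁆ ≠ 0) :
    ∃ I a : LieIdeal K g,
      -- g = g₁ ⊕ a as a direct sum …
      IsCompl I.toSubmodule a.toSubmodule ∧
      -- … which is φ-orthogonal
      (∀ x ∈ I, ∀ y ∈ a, φ x y = 0) ∧
      -- φ restricts nondegenerately to each summand: each is quadratic
      (∀ x ∈ I, (∀ y ∈ I, φ x y = 0) → x = 0) ∧
      (∀ x ∈ a, (∀ y ∈ a, φ x y = 0) → x = 0) ∧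
      -- a is abelian and central
      (∀ x ∈ a, ∀ y : g, ⁅x, y⁆ = 0) ∧
      -- g₁ is reduced: its center is contained in its derived subalgebra
      (∀ x ∈ I, (∀ y ∈ I, ⁅x, y⁆ = 0) →
        x ∈ Submodule.span K {z | ∃ u ∈ I, ∃ w ∈ I, ⁅u, w⁆ = z}) := by
  clear hnonred hnonab
  have hrefl : φ.IsRefl := hsymm.isRefl
  have hsym : ∀ x y : g, φ x y = φ y x := fun x y => by simpa using hsymm.eq x y
  set Z : Submodule K g := (LieAlgebra.center K g).toSubmodule with hZdef
  have hmemZ : ∀ z : g, z ∈ Z ↔ ∀ y : g, ⁅z, y⁆ = 0 := by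
    intro z
    constructor
    · intro hz y
      have := (LieModule.mem_maxTrivSubmodule K g g z).mp hz y
      rw [← lie_skew, this, neg_zero]
    · intro hz
      exact (LieModule.mem_maxTrivSubmodule K g g z).mpr fun y => by
        rw [← lie_skew, hz y, neg_zero]
  set W : Submodule K g := Z ⊓ φ.orthogonal Z with hWdef
  have hWZ : W ≤ Z := inf_le_left
  obtain ⟨C, hC⟩ := Submodule.exists_isCompl (W.comap Z.subtype)
  set A : Submodule K g := C.map Z.subtype with hAdef
  have hAZ : A ≤ Z := by
    rintro x ⟨c, _, rfl⟩
    exact (c : Z).2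
  have h1 : W = Submodule.map Z.subtype (W.comap Z.subtype) := by
    rw [Submodule.map_comap_subtype, inf_eq_right.mpr hWZ]
  have hAW_disj : A ⊓ W = ⊥ := by
    rw [hAdef, h1, ← Submodule.map_inf _ Z.injective_subtype, hC.symm.inf_eq_bot,
      Submodule.map_bot]
  have hAW_sup : A ⊔ W = Z := by
    rw [hAdef, h1, ← Submodule.map_sup, hC.symm.sup_eq_top, Submodule.map_subtype_top]
  have hAcent : ∀ x ∈ A, ∀ y : g, ⁅x, y⁆ = 0 := fun x hx => (hmemZ x).mp (hAZ hx)
  have hAcent' : ∀ x y : g, y ∈ A → ⁅x, y⁆ = 0 := fun x y hy => by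
    rw [← lie_skew, hAcent y hy x, neg_zero]
  -- W-elements are orthogonal to Z-elements
  have hWorth : ∀ w ∈ W, ∀ z ∈ Z, φ z w = 0 := fun w hw z hz => hw.2 z hz
  -- φ restricted to A is nondegenerate
  have hndA : ∀ x ∈ A, (∀ y ∈ A, φ x y = 0) → x = 0 := by
    intro x hxA hx
    have hxZ : x ∈ Z := hAZ hxA
    have hxW : x ∈ W := by
      refine ⟨hxZ, fun n hn => ?_⟩
      have hn' : n ∈ A ⊔ W := hAW_sup ▸ hn
      obtain ⟨v, hv, w, hw, rfl⟩ := Submodule.mem_sup.mp hn'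
      show φ (v + w) x = 0
      rw [hsym, map_add, hx v hv, hWorth w hw x hxZ, add_zero]
    have : x ∈ A ⊓ W := ⟨hxA, hxW⟩
    rw [hAW_disj] at this
    exact this
  set O : Submodule K g := φ.orthogonal A with hOdef
  have horth : ∀ x ∈ O, ∀ y ∈ A, φ x y = 0 := fun x hx y hy =>
    (hsym x y).trans (hx y hy)
  have hcompl : IsCompl A O := by
    apply LinearMap.BilinForm.isCompl_orthogonal_of_restrict_nondegenerate hrefl
    refine (LinearMap.IsRefl.nondegenerate_iff_separatingLeft (hsymm.restrict A).isRefl).mpr ?_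
    intro ⟨x, hx⟩ h
    have : ∀ y ∈ A, φ x y = 0 := fun y hy => h ⟨y, hy⟩
    exact Subtype.ext (hndA x hx this)
  have hsup : ∀ y : g, ∃ v ∈ A, ∃ w ∈ O, y = v + w := by
    intro y
    have hy : y ∈ A ⊔ O := by rw [hcompl.sup_eq_top]; exact Submodule.mem_top
    obtain ⟨v, hv, w, hw, h⟩ := Submodule.mem_sup.mp hy
    exact ⟨v, hv, w, hw, h.symm⟩
  set D : Submodule K g := Submodule.span K {z : g | ∃ u w : g, ⁅u, w⁆ = z} with hDdef
  have hZD : Z = φ.orthogonal D := by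
    ext z
    constructor
    · intro hz
      intro n hn
      show φ n z = 0
      induction hn using Submodule.span_induction with
      | mem t ht =>
        obtain ⟨u, w, rfl⟩ := ht
        rw [hinv u w z, ← lie_skew, (hmemZ z).mp hz w, neg_zero, map_zero]
      | zero => simp
      | add s t _ _ hs ht => rw [map_add, LinearMap.add_apply, hs, ht, add_zero]
      | smul c s _ hs => rw [map_smul, LinearMap.smul_apply, hs, smul_zero]
    · intro hz
      rw [hmemZ]
      intro y
      apply hnd.1
      intro t
      rw [hsym, show ⁅z, y⁆ = -⁅y, z⁆ from (lie_skew z y).symm, map_neg, neg_eq_zero,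
        ← hinv t y z]
      exact hz ⁅t, y⁆ (Submodule.subset_span ⟨t, y, rfl⟩)
  have hZorth : φ.orthogonal Z = D := by
    rw [hZD, LinearMap.BilinForm.orthogonal_orthogonal hnd hrefl]
  let aI : LieIdeal K g :=
    { A with
      lie_mem := fun {x m} hm => by
        show ⁅x, m⁆ ∈ A
        rw [hAcent' x m hm]
        exact A.zero_mem }
  let II : LieIdeal K g :=
    { O with
      lie_mem := fun {x m} _ => by
        show ⁅x, m⁆ ∈ O
        intro n hn
        show φ n ⁅x, m⁆ = 0
        rw [hsym n ⁅x, m⁆, hinv x m n, hAcent' m n hn, map_zero] }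
  refine ⟨II, aI, hcompl.symm, ?_, ?_, hndA, hAcent, ?_⟩
  · intro x hx y hy
    exact horth x hx y hy
  · intro x hx h
    apply hnd.1
    intro y
    obtain ⟨v, hv, w, hw, rfl⟩ := hsup y
    rw [map_add, horth x hx v hv, h w hw, add_zero]
  · intro x hx h
    have hxZ : x ∈ Z := by
      rw [hmemZ]
      intro y
      obtain ⟨v, hv, w, hw, rfl⟩ := hsup y
      rw [lie_add, hAcent' x v hv, h w hw, add_zero]
    have hxD : x ∈ D := by
      rw [← hZorth]
      intro n hn
      have hn' : n ∈ A ⊔ W := hAW_sup ▸ hn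
      obtain ⟨v, hv, w, hw, rfl⟩ := Submodule.mem_sup.mp hn'
      show φ (v + w) x = 0
      have e1 : φ v x = 0 := hx v hv
      have e2 : φ w x = 0 := (hsym w x).trans (hWorth w hw x hxZ)
      rw [map_add, LinearMap.add_apply, e1, e2, add_zero]
    have hDle : D ≤ Submodule.span K {z : g | ∃ u ∈ II, ∃ w ∈ II, ⁅u, w⁆ = z} := by
      apply Submodule.span_le.mpr
      rintro t ⟨u, w, rfl⟩
      obtain ⟨u₂, hu₂, u₁, hu₁, rfl⟩ := hsup u
      obtain ⟨w₂, hw₂, w₁, hw₁, rfl⟩ := hsup w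
      have : ⁅u₂ + u₁, w₂ + w₁⁆ = ⁅u₁, w₁⁆ := by
        rw [add_lie, lie_add, lie_add, hAcent u₂ hu₂, hAcent u₂ hu₂,
          hAcent' u₁ w₂ hw₂]
        abel
      rw [this]
      exact Submodule.subset_span ⟨u₁, hu₁, w₁, hw₁, rfl⟩
    exact hDle hxD
end

section
/- The 3-quadratic families of matrices over a field K of characteristic 0 are exactly the families {A₁(a), A₂(a), A₃(a)} with a ∈ K, a ≠ 0, where A₁(a) = [[0,0,0],[0,0,a],[0,−a,0]], A₂(a) = [[0,0,−a],[0,0,0],[a,0,0]], A₃(a) = [[0,a,0],[−a,0,0],[0,0,0]]. -/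
/-!
Skew-symmetry, the vanishing of the `i`-th column of `Aᵢ` and (in characteristic `0`) of the
diagonal leave a single entry `±a` in each `Aᵢ`, and the relations between the columns of
different `Aᵢ` tie these entries together, so the family is `{A₁(a), A₂(a), A₃(a)}` with `a`
the `(2,3)` entry of `A₁`. For this family `B` is, up to reordering its columns, the
antidiagonal matrix with entries `-a, a, -a`, which has rank `3` exactly when `a ≠ 0`.
-/

open Matrix

lemma Matrix.apply_self_eq_zero_of_transpose_eq_neg {n G : Type*} [AddGroup G]
    [IsAddTorsionFree G] {M : Matrix n n G} (hM : Mᵀ = -M) (k : n) : M k k = 0 :=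
  self_eq_neg.mp (congrFun (congrFun hM k) k)

lemma Matrix.apply_eq_neg_of_transpose_eq_neg {n G : Type*} [AddGroup G]
    {M : Matrix n n G} (hM : Mᵀ = -M) (k l : n) : M k l = -M l k :=
  congrFun (congrFun hM l) k

section

variable {K : Type*} [Field K]

def stdQuadFamily (a : K) : Fin 3 → Matrix (Fin 3) (Fin 3) K :=
  ![!![0, 0, 0; 0, 0, a; 0, -a, 0],
    !![0, 0, -a; 0, 0, 0; a, 0, 0],
    !![0, a, 0; -a, 0, 0; 0, 0, 0]]

lemma eq_stdQuadFamily [CharZero K] {A : Fin 3 → Matrix (Fin 3) (Fin 3) K}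
    (hskew : ∀ i, (A i)ᵀ = -(A i)) (hcol : ∀ i k, A i k i = 0)
    (hcross : ∀ i j : Fin 3, i < j → ∀ k, A i k j = -(A j k i)) :
    A = stdQuadFamily (A 0 1 2) := by
  have hanti := fun i => apply_eq_neg_of_transpose_eq_neg (hskew i)
  have hdiag := fun i => apply_self_eq_zero_of_transpose_eq_neg (hskew i)
  have h01 := hcross 0 1 (by decide) 2
  have h02 := hcross 0 2 (by decide) 1
  -- Each entry is zero (diagonal, or `i`-th row or column of `A i`) or is `±A 0 1 2`
  -- by skew-symmetry and the two relations above.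
  ext i k l
  fin_cases i <;> fin_cases k <;> fin_cases l <;> simp [stdQuadFamily] <;> grind

lemma eq_stdQuadFamily_iff {A : Fin 3 → Matrix (Fin 3) (Fin 3) K} {a : K} :
    A = stdQuadFamily a ↔
      A 0 = !![0, 0, 0; 0, 0, a; 0, -a, 0] ∧
        A 1 = !![0, 0, -a; 0, 0, 0; a, 0, 0] ∧
        A 2 = !![0, a, 0; -a, 0, 0; 0, 0, 0] := by
  simp [funext_iff, Fin.forall_fin_succ, stdQuadFamily]

/-- The matrix `B(A₁, …, A_d)`. -/
def pairColumnMatrix {d : ℕ} (A : Fin d → Matrix (Fin d) (Fin d) K) :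
    Matrix (Fin d) {p : Fin d × Fin d // p.1 < p.2} K :=
  Matrix.of fun k p => A p.val.1 k p.val.2

noncomputable def pairEquivFinThree : Fin 3 ≃ {p : Fin 3 × Fin 3 // p.1 < p.2} :=
  Equiv.ofBijective ![⟨(0, 1), by decide⟩, ⟨(0, 2), by decide⟩, ⟨(1, 2), by decide⟩]
    (by decide)

lemma pairColumnMatrix_stdQuadFamily_submatrix (a : K) :
    (pairColumnMatrix (stdQuadFamily a)).submatrix (Equiv.refl _) pairEquivFinThree =
      !![0, 0, -a; 0, a, 0; -a, 0, 0] := by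
  ext k p
  fin_cases k <;> fin_cases p <;> rfl

lemma rank_pairColumnMatrix_stdQuadFamily {a : K} (ha : a ≠ 0) :
    (pairColumnMatrix (stdQuadFamily a)).rank = 3 := by
  have hdet : (!![0, 0, -a; 0, a, 0; -a, 0, 0] : Matrix (Fin 3) (Fin 3) K).det = -a ^ 3 := by
    simp [det_fin_three]; ring
  rw [← rank_submatrix _ (Equiv.refl _) pairEquivFinThree,
    pairColumnMatrix_stdQuadFamily_submatrix, rank_of_isUnit, Fintype.card_fin]
  simp [isUnit_iff_isUnit_det, hdet, ha]

lemma isQuadraticFamily_stdQuadFamily_iff (a : K) :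
    IsQuadraticFamily (stdQuadFamily a) ↔ a ≠ 0 := by
  have hskew : ∀ i, (stdQuadFamily a i)ᵀ = -stdQuadFamily a i := by
    intro i; ext k l; fin_cases i <;> fin_cases k <;> fin_cases l <;> simp [stdQuadFamily]
  have hcol : ∀ i k, stdQuadFamily a i k i = 0 := by
    intro i k; fin_cases i <;> fin_cases k <;> simp [stdQuadFamily]
  have hcross :
      ∀ i j : Fin 3, i < j → ∀ k, stdQuadFamily a i k j = -stdQuadFamily a j k i := by
    intro i j hij k
    fin_cases i <;> fin_cases j <;> fin_cases k <;> simp_all [stdQuadFamily]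
  refine ⟨fun h ha => ?_,
    fun ha => ⟨hskew, hcol, hcross, rank_pairColumnMatrix_stdQuadFamily ha⟩⟩
  have h0 : pairColumnMatrix (stdQuadFamily (0 : K)) = 0 := by
    ext k ⟨⟨i, j⟩, hij⟩
    fin_cases i <;> fin_cases j <;> fin_cases k <;> simp [pairColumnMatrix, stdQuadFamily]
  have hrank : (pairColumnMatrix (stdQuadFamily a)).rank = 3 := h.2.2.2
  simp [ha, h0] at hrank

end

/-- the 3-quadratic families over a field of characteristic 0 are exactly
the families `{A₁(a), A₂(a), A₃(a)}` with `a ≠ 0`. -/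
theorem stmt_18 {K : Type*} [Field K] [CharZero K]
    (A : Fin 3 → Matrix (Fin 3) (Fin 3) K) :
    IsQuadraticFamily A ↔
      ∃ a : K, a ≠ 0 ∧
        A 0 = !![0, 0, 0; 0, 0, a; 0, -a, 0] ∧
        A 1 = !![0, 0, -a; 0, 0, 0; a, 0, 0] ∧
        A 2 = !![0, a, 0; -a, 0, 0; 0, 0, 0] := by
  simp only [← eq_stdQuadFamily_iff]
  constructor
  · intro hA
    have h := eq_stdQuadFamily hA.1 hA.2.1 hA.2.2.1
    rw [h] at hA
    exact ⟨_, (isQuadraticFamily_stdQuadFamily_iff _).mp hA, h⟩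
  · rintro ⟨a, ha, rfl⟩
    exact (isQuadraticFamily_stdQuadFamily_iff a).mpr ha
end

section
/- For d = 5, taking the 5-quadratic family with all parameters zero except a₁ yields B(A₁,…,A₅) of rank at most 4; more generally, for d = 5 or d = 6, no choice of family parameters with only one nonzero parameter gives B(A₁,…,A_d) of rank d, but there exist choices with exactly two nonzero parameters achieving rank d (e.g., for d = 6, the pairs (a_i, a_{21−i}) with both nonzero and all others zero give rank 6). -/
open Matrix

/-- The matrix `B(A₁,…,A₅)` of a 5-quadratic family, in terms of its 10 free
parameters `a₁,…,a₁₀` (here `a 0, …, a 9`). -/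
def B5 {K : Type*} [Field K] (a : Fin 10 → K) : Matrix (Fin 5) (Fin 10) K :=
  !![0, 0, 0, 0, -a 0, -a 1, -a 2, -a 3, -a 4, -a 5;
     0, a 0, a 1, a 2, 0, 0, 0, -a 6, -a 7, -a 8;
     -a 0, 0, a 3, a 4, 0, a 6, a 7, 0, 0, -a 9;
     -a 1, -a 3, 0, a 5, -a 6, 0, a 8, 0, a 9, 0;
     -a 2, -a 4, -a 5, 0, -a 7, -a 8, 0, -a 9, 0, 0]

/-- The matrix `B(A₁,…,A₆)` of a 6-quadratic family, in terms of its 20 free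
parameters `a₁,…,a₂₀` (here `a 0, …, a 19`). -/
def B6 {K : Type*} [Field K] (a : Fin 20 → K) : Matrix (Fin 6) (Fin 15) K :=
  !![0, 0, 0, 0, 0, -a 0, -a 1, -a 2, -a 3, -a 4, -a 5, -a 6, -a 7, -a 8, -a 9;
     0, a 0, a 1, a 2, a 3, 0, 0, 0, 0, -a 10, -a 11, -a 12, -a 13, -a 14, -a 15;
     -a 0, 0, a 4, a 5, a 6, 0, a 10, a 11, a 12, 0, 0, 0, -a 16, -a 17, -a 18;
     -a 1, -a 4, 0, a 7, a 8, -a 10, 0, a 13, a 14, 0, a 16, a 17, 0, 0, -a 19;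
     -a 2, -a 5, -a 7, 0, a 9, -a 11, -a 13, 0, a 15, -a 16, 0, a 18, 0, a 19, 0;
     -a 3, -a 6, -a 8, -a 9, 0, -a 12, -a 14, -a 15, 0, -a 17, -a 18, 0, -a 19, 0, 0]

/-!
Each parameter occurs in only three rows of `B`, so when a single parameter is nonzero some
row of `B` vanishes and the rank drops below `d`. For the two-parameter families one picks, in
every row, a column carrying one of the two parameters, such that the resulting `d × d` minor is
diagonal; its diagonal entries are `±c₁` and `±c₂`, so the minor is invertible.
-/

namespace Matrix

variable {m n K : Type*} [Fintype m] [Fintype n] [Field K]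

theorem rank_lt_card_height_of_row_eq_zero (M : Matrix m n K) {r : m} (hr : M r = 0) :
    M.rank < Fintype.card m := by
  classical
  have hspan : Submodule.span K (Set.range M) ≤
      Submodule.span K (Set.range fun i : {i // i ≠ r} => M i) := by
    refine Submodule.span_le.2 ?_
    rintro _ ⟨i, rfl⟩
    by_cases hi : i = r
    · simp [hi, hr]
    · exact Submodule.subset_span ⟨⟨i, hi⟩, rfl⟩
  calc M.rank ≤ _ := M.rank_eq_finrank_span_row ▸ Submodule.finrank_mono hspan
    _ ≤ Fintype.card {i // i ≠ r} := finrank_range_le_card _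
    _ < Fintype.card m := Fintype.card_subtype_lt (p := (· ≠ r)) (x := r) (by simp)

theorem rank_eq_card_height_of_diagonal_minor [DecidableEq m] (M : Matrix m n K) (f : m → n)
    (hoff : ∀ i k, i ≠ k → M i (f k) = 0) (hdiag : ∀ i, M i (f i) ≠ 0) :
    M.rank = Fintype.card m := by
  have hminor : M.submatrix id f = diagonal fun i => M i (f i) := by
    ext i k
    by_cases hik : i = k
    · simp [hik]
    · simp [hik, hoff i k hik]
  have hunit : IsUnit (M.submatrix id f) := by
    rw [isUnit_iff_isUnit_det, hminor, det_diagonal]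
    exact (Finset.prod_ne_zero_iff.2 fun i _ => hdiag i).isUnit
  refine le_antisymm M.rank_le_card_height ?_
  calc Fintype.card m = (M.submatrix id f).rank := (rank_of_isUnit _ hunit).symm
    _ ≤ M.rank := rank_submatrix_le M id f

end Matrix

theorem Pi.eq_single_of_forall_ne {ι M : Type*} [DecidableEq ι] [Zero M] {f : ι → M} {i : ι}
    (h : ∀ j, j ≠ i → f j = 0) : f = Pi.single i (f i) := by
  funext j
  by_cases hj : j = i
  · rw [hj, Pi.single_eq_same]
  · rw [Pi.single_eq_of_ne hj, h j hj]

section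

variable {K : Type*} [Field K]

theorem exists_B5_single_row_eq_zero (i : Fin 10) (c : K) : ∃ r, B5 (Pi.single i c) r = 0 :=
  ⟨![3, 2, 2, 1, 1, 1, 0, 0, 0, 0] i, by
    fin_cases i <;> simp [B5, funext_iff, Fin.forall_fin_succ]⟩

theorem exists_B6_single_row_eq_zero (i : Fin 20) (c : K) : ∃ r, B6 (Pi.single i c) r = 0 :=
  ⟨![3, 2, 2, 2, 1, 1, 1, 1, 1, 1, 0, 0, 0, 0, 0, 0, 0, 0, 0, 0] i, by
    fin_cases i <;> simp [B6, funext_iff, Fin.forall_fin_succ]⟩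

theorem rank_B5_lt_of_single {a : Fin 10 → K} (ha : ∃ i, ∀ j, j ≠ i → a j = 0) :
    (B5 a).rank < 5 := by
  obtain ⟨i, hi⟩ := ha
  obtain ⟨r, hr⟩ := exists_B5_single_row_eq_zero i (a i)
  rw [← Pi.eq_single_of_forall_ne hi] at hr
  simpa using (B5 a).rank_lt_card_height_of_row_eq_zero hr

theorem rank_B6_lt_of_single {a : Fin 20 → K} (ha : ∃ i, ∀ j, j ≠ i → a j = 0) :
    (B6 a).rank < 6 := by
  obtain ⟨i, hi⟩ := ha
  obtain ⟨r, hr⟩ := exists_B6_single_row_eq_zero i (a i)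
  rw [← Pi.eq_single_of_forall_ne hi] at hr
  simpa using (B6 a).rank_lt_card_height_of_row_eq_zero hr

theorem rank_B5_single_zero_add_single_nine {c₁ c₂ : K} (h₁ : c₁ ≠ 0) (h₂ : c₂ ≠ 0) :
    (B5 (Pi.single 0 c₁ + Pi.single 9 c₂ : Fin 10 → K)).rank = 5 :=
  (rank_eq_card_height_of_diagonal_minor _ ![4, 1, 0, 8, 7]
    (by simp [B5, Fin.forall_fin_succ]) (by simp [B5, Fin.forall_fin_succ, h₁, h₂])).trans
    (Fintype.card_fin 5)

theorem rank_B6_single_add_single_rev (i : Fin 20) {c₁ c₂ : K} (h₁ : c₁ ≠ 0) (h₂ : c₂ ≠ 0) :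
    (B6 (Pi.single i c₁ + Pi.single i.rev c₂ : Fin 20 → K)).rank = 6 := by
  wlog hi : (i : ℕ) < 10 generalizing i c₁ c₂
  · simpa only [Fin.rev_rev, add_comm] using this i.rev h₂ h₁ (by rw [Fin.val_rev]; omega)
  obtain ⟨k, rfl⟩ : ∃ k : Fin 10, Fin.castLE (by norm_num) k = i := ⟨⟨i, hi⟩, rfl⟩
  refine (rank_eq_card_height_of_diagonal_minor _
    (![![5, 1, 0, 14, 13, 12], ![6, 2, 14, 0, 11, 10], ![7, 3, 13, 11, 0, 9],
      ![8, 4, 12, 10, 9, 0], ![9, 14, 2, 1, 8, 7], ![10, 13, 3, 8, 1, 6],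
      ![11, 12, 4, 7, 6, 1], ![12, 11, 8, 3, 2, 5], ![13, 10, 7, 4, 5, 2],
      ![14, 9, 6, 5, 4, 3]] k) ?_ ?_).trans (Fintype.card_fin 6)
  all_goals fin_cases k <;> simp [B6, Fin.forall_fin_succ, h₁, h₂]

end

theorem stmt_19_general {K : Type*} [Field K] :
    -- all parameters zero except a₁ gives rank ≤ 4 for d = 5
    (∀ c : K, (B5 (fun j => if j = 0 then c else 0)).rank ≤ 4) ∧
    -- one nonzero parameter never suffices for d = 5
    (∀ a : Fin 10 → K, (∃ i, ∀ j, j ≠ i → a j = 0) → (B5 a).rank < 5) ∧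
    -- one nonzero parameter never suffices for d = 6
    (∀ a : Fin 20 → K, (∃ i, ∀ j, j ≠ i → a j = 0) → (B6 a).rank < 6) ∧
    -- two nonzero parameters can achieve rank 5 for d = 5
    (∃ a : Fin 10 → K, (∃ i j, i ≠ j ∧ a i ≠ 0 ∧ a j ≠ 0 ∧
        ∀ k, k ≠ i → k ≠ j → a k = 0) ∧ (B5 a).rank = 5) ∧
    -- for d = 6 each pair (aᵢ, a₂₁₋ᵢ), both nonzero, all others zero, gives rank 6
    (∀ (i : Fin 20) (c₁ c₂ : K), c₁ ≠ 0 → c₂ ≠ 0 →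
      (B6 (fun j => if j = i then c₁
        else if (j : ℕ) + (i : ℕ) = 19 then c₂ else 0)).rank = 6) := by
  refine ⟨fun c => Nat.lt_succ_iff.1 (rank_B5_lt_of_single ⟨0, fun j hj => if_neg hj⟩),
    fun _ => rank_B5_lt_of_single, fun _ => rank_B6_lt_of_single, ?_, ?_⟩
  · refine ⟨Pi.single 0 1 + Pi.single 9 1, ⟨0, 9, by decide, by simp, by simp, ?_⟩,
      rank_B5_single_zero_add_single_nine one_ne_zero one_ne_zero⟩
    intro k h₀ h₉
    simp [h₀, h₉]
  · intro i c₁ c₂ h₁ h₂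
    have hpair : (fun j : Fin 20 => if j = i then c₁ else if (j : ℕ) + (i : ℕ) = 19 then c₂ else 0)
        = Pi.single i c₁ + Pi.single i.rev c₂ := by
      funext j
      simp only [Pi.add_apply, Pi.single_apply, Fin.ext_iff, Fin.val_rev]
      split_ifs <;> first | omega | simp
    rw [hpair]
    exact rank_B6_single_add_single_rev i h₁ h₂

/-- for `d = 5`, the family with all parameters zero except `a₁` gives
`B(A₁,…,A₅)` of rank at most 4; for `d = 5` or `d = 6` no family with only one nonzero
parameter gives `B` of rank `d`, but there are choices with exactly two nonzero
parameters achieving rank `d`: e.g. for `d = 6` the pairs `(aᵢ, a₂₁₋ᵢ)`, both nonzero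
and all other parameters zero, give rank `6`. -/
theorem stmt_19 {K : Type*} [Field K] [CharZero K] :
    -- all parameters zero except a₁ gives rank ≤ 4 for d = 5
    (∀ c : K, (B5 (fun j => if j = 0 then c else 0)).rank ≤ 4) ∧
    -- one nonzero parameter never suffices for d = 5
    (∀ a : Fin 10 → K, (∃ i, ∀ j, j ≠ i → a j = 0) → (B5 a).rank < 5) ∧
    -- one nonzero parameter never suffices for d = 6
    (∀ a : Fin 20 → K, (∃ i, ∀ j, j ≠ i → a j = 0) → (B6 a).rank < 6) ∧
    -- two nonzero parameters can achieve rank 5 for d = 5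
    (∃ a : Fin 10 → K, (∃ i j, i ≠ j ∧ a i ≠ 0 ∧ a j ≠ 0 ∧
        ∀ k, k ≠ i → k ≠ j → a k = 0) ∧ (B5 a).rank = 5) ∧
    -- for d = 6 each pair (aᵢ, a₂₁₋ᵢ), both nonzero, all others zero, gives rank 6
    (∀ (i : Fin 20) (c₁ c₂ : K), c₁ ≠ 0 → c₂ ≠ 0 →
      (B6 (fun j => if j = i then c₁
        else if (j : ℕ) + (i : ℕ) = 19 then c₂ else 0)).rank = 6) :=
  stmt_19_general
end
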